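/- arXiv:2001.08493 — 3 statements merged into one kernel-verified Lean document; each statement's English description precedes it below -/
import Mathlib

section
/- For every finite clique C in the contact graph of a CAT(0) cube complex X (i.e. a finite set of hyperplanes whose carriers pairwise intersect), there exists a vertex v of X such that every hyperplane in C is adjacent to v (i.e. crosses an edge of X incident to v). -/
open SimpleGraph

variable {V : Type*}

/-- A median graph: combinatorial model of (the 1-skeleton of) a CAT(0) cube complex. -/
def IsMedianGraph (G : SimpleGraph V) : Prop :=
  G.Connected ∧ ∀ x y z : V, ∃! m : V,
    G.dist x m + G.dist m y = G.dist x y ∧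
    G.dist x m + G.dist m z = G.dist x z ∧
    G.dist y m + G.dist m z = G.dist y z

/-- Djoković–Winkler relation on oriented edges of a median graph; hyperplanes are its classes. -/
def Theta (G : SimpleGraph V) (e f : V × V) : Prop :=
  G.dist e.1 f.1 + G.dist e.2 f.2 ≠ G.dist e.1 f.2 + G.dist e.2 f.1

/-- A hyperplane, identified with the set of (oriented) edges crossing it. -/
def IsHyperplane (G : SimpleGraph V) (h : Set (V × V)) : Prop :=
  ∃ e : V × V, G.Adj e.1 e.2 ∧ h = {f | G.Adj f.1 f.2 ∧ Theta G e f}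

/-- The hyperplane `h` is adjacent to the vertex `v` (i.e. `v` lies in the carrier of `h`). -/
def AdjTo (G : SimpleGraph V) (h : Set (V × V)) (v : V) : Prop :=
  ∃ e ∈ h, e.1 = v ∨ e.2 = v

/-- `Wv G v`: the set of hyperplanes adjacent to `v`. -/
def Wv (G : SimpleGraph V) (v : V) : Set (Set (V × V)) :=
  {h | IsHyperplane G h ∧ AdjTo G h v}

/-- Two hyperplanes are in contact if their carriers share a vertex. -/
def Contact (G : SimpleGraph V) (h h' : Set (V × V)) : Prop :=
  ∃ v : V, AdjTo G h v ∧ AdjTo G h' v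

/-- Two hyperplanes are transverse if they cross a common square. -/
def Transverse (G : SimpleGraph V) (h h' : Set (V × V)) : Prop :=
  ∃ a b c d : V, (a, b) ∈ h ∧ (c, d) ∈ h ∧ (a, c) ∈ h' ∧ (b, d) ∈ h' ∧
    G.Adj a b ∧ G.Adj c d ∧ G.Adj a c ∧ G.Adj b d

/-- A clique in the contact graph: a set of hyperplanes whose carriers pairwise intersect. -/
def IsContactClique (G : SimpleGraph V) (C : Set (Set (V × V))) : Prop :=
  (∀ h ∈ C, IsHyperplane G h) ∧ ∀ h ∈ C, ∀ h' ∈ C, h ≠ h' → Contact G h h'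

/-- A maximal clique in the contact graph. -/
def IsMaxContactClique (G : SimpleGraph V) (C : Set (Set (V × V))) : Prop :=
  IsContactClique G C ∧ ∀ C', IsContactClique G C' → C ⊆ C' → C' = C

/-- The link of `v` is a cone, i.e. `v` is an extremal vertex. -/
def LinkIsCone (G : SimpleGraph V) (v : V) : Prop :=
  ∃ h ∈ Wv G v, ∀ h' ∈ Wv G v, h' ≠ h → Transverse G h h'

/-- Uniform local finiteness. -/
def UnifLocFinite (G : SimpleGraph V) : Prop :=
  ∃ N : ℕ, ∀ v : V, (G.neighborSet v).Finite ∧ (G.neighborSet v).ncard ≤ N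

abbrev Hyp (G : SimpleGraph V) := {h : Set (V × V) // IsHyperplane G h}

/-- The contact graph `𝒞(X)`. -/
def contactGraph (G : SimpleGraph V) : SimpleGraph (Hyp G) where
  Adj h h' := h ≠ h' ∧ Contact G h.1 h'.1
  symm := by
    refine ⟨?_⟩
    rintro h h' ⟨hne, v, hv, hv'⟩
    exact ⟨hne.symm, v, hv', hv⟩
  loopless := by refine ⟨?_⟩; rintro h ⟨hne, -⟩; exact hne rfl

/-- `Ical G w` = I(w): the hyperplanes whose carrier contains the carrier of `w`,
i.e. the intersection of the sets `Wv G v` over all vertices `v` adjacent to `w`. -/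
def Ical (G : SimpleGraph V) (w : Set (V × V)) : Set (Set (V × V)) :=
  {u | IsHyperplane G u ∧ ∀ v : V, AdjTo G w v → AdjTo G u v}

/-- `Ical0 G w` = I⁰(w): the hyperplanes with the same carrier as `w`. -/
def Ical0 (G : SimpleGraph V) (w : Set (V × V)) : Set (Set (V × V)) :=
  {u | u ∈ Ical G w ∧ w ∈ Ical G u}

/-- The action of a cubical automorphism on sets of edges (e.g. hyperplanes). -/
def hmap (G : SimpleGraph V) (φ : G ≃g G) (h : Set (V × V)) : Set (V × V) :=
  (fun e : V × V => (φ e.1, φ e.2)) '' h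

/-- `π` is the vertex permutation induced by the contact-graph automorphism `ψ` via the
correspondence between vertices and maximal cliques (`ρ(ψ) = π`). -/
def InducesPerm (G : SimpleGraph V) (ψ : contactGraph G ≃g contactGraph G)
    (π : Equiv.Perm V) : Prop :=
  ∀ (v : V) (h : Hyp G), h.1 ∈ Wv G v ↔ (ψ h).1 ∈ Wv G (π v)

/-- The hyperplane `u` is adjacent, inside the cube complex structure of a hyperplane `w`,
to the vertex of `w` given by the edge `e ∈ w`: `u` crosses a square containing `e`. -/
def HypAdjEdge (G : SimpleGraph V) (u : Set (V × V)) (e : V × V) : Prop :=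
  ∃ c d : V, (e.1, c) ∈ u ∧ (e.2, d) ∈ u ∧ G.Adj c d

/-- The link, in the cube complex structure of hyperplane `w`, of the vertex given by
`e ∈ w` is a cone (i.e. this vertex of `w` is extremal). -/
def HypLinkCone (G : SimpleGraph V) (w : Set (V × V)) (e : V × V) : Prop :=
  ∃ u, IsHyperplane G u ∧ u ≠ w ∧ HypAdjEdge G u e ∧
    ∀ u', IsHyperplane G u' → u' ≠ w → HypAdjEdge G u' e → u' ≠ u → Transverse G u u'

/-- No hyperplane of `X` has an extremal vertex. -/
def NoHypExtremalVertex (G : SimpleGraph V) : Prop :=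
  ∀ w, IsHyperplane G w → ∀ e ∈ w, ¬ HypLinkCone G w e

/-!
Carriers of hyperplanes are convex, and finitely many pairwise intersecting convex vertex sets of
a median graph have a common vertex: for three sets the median of three pairwise intersection
points is such a vertex, and induction on the number of sets does the rest.

The carrier of the hyperplane dual to an edge `ab` is convex because the halfspace `W(a,b)` of
vertices closer to `a` than to `b` is. For the latter, induct on the length `n` of geodesics
between points `x, z` of `W(a,b)`. A neighbour `y ∈ W(b,a)` of `x` one step closer to `z` is ruled
out by stepping from `x` towards the median of `x, z, a` and applying the quadrangle condition
at `z`: this gives a geodesic `x, y, w` of length two with `w ∈ W(a,b)`. For such a geodesic, the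
median of `x, w, a` would be a second median of `x, w, b` besides `y`.
-/

namespace SimpleGraph

variable {G : SimpleGraph V}

def interval (G : SimpleGraph V) (x z : V) : Set V :=
  {y | G.dist x y + G.dist y z = G.dist x z}

def IsConvex (G : SimpleGraph V) (S : Set V) : Prop :=
  ∀ x ∈ S, ∀ z ∈ S, G.interval x z ⊆ S

def halfspace (G : SimpleGraph V) (a b : V) : Set V :=
  {v | G.dist v a + 1 = G.dist v b}

def halfspaceBoundary (G : SimpleGraph V) (a b : V) : Set V :=
  {v ∈ G.halfspace a b | ∃ u, G.Adj v u ∧ u ∈ G.halfspace b a}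

def wallCarrier (G : SimpleGraph V) (a b : V) : Set V :=
  G.halfspaceBoundary a b ∪ G.halfspaceBoundary b a

lemma mem_interval {x y z : V} :
    y ∈ G.interval x z ↔ G.dist x y + G.dist y z = G.dist x z := Iff.rfl

lemma mem_halfspace {a b v : V} : v ∈ G.halfspace a b ↔ G.dist v a + 1 = G.dist v b := Iff.rfl

lemma left_mem_halfspace {a b : V} (hab : G.Adj a b) : a ∈ G.halfspace a b := by
  rw [mem_halfspace, dist_self, dist_eq_one_iff_adj.mpr hab]

lemma wallCarrier_comm (a b : V) : G.wallCarrier a b = G.wallCarrier b a :=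
  Set.union_comm _ _

lemma IsConvex.inter {A B : Set V} (hA : G.IsConvex A) (hB : G.IsConvex B) :
    G.IsConvex (A ∩ B) :=
  fun x hx z hz _ hy => ⟨hA x hx.1 z hz.1 hy, hB x hx.2 z hz.2 hy⟩

lemma Connected.exists_adj_dist_eq (hconn : G.Connected) {x z : V} {n : ℕ}
    (h : G.dist x z = n + 1) : ∃ y, G.Adj x y ∧ G.dist y z = n := by
  obtain ⟨p, hp⟩ := hconn.exists_walk_length_eq_dist x z
  cases p with
  | nil => simp_all
  | @cons _ y _ hadj q =>
    refine ⟨_, hadj, le_antisymm ?_ ?_⟩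
    · have := dist_le q
      simp only [Walk.length_cons] at hp
      omega
    · have := hconn.dist_triangle (u := x) (v := y) (w := z)
      have := dist_eq_one_iff_adj.mpr hadj
      omega

lemma Connected.mem_interval_of_mem_interval (hconn : G.Connected) {x y z x' z' : V}
    (hy : y ∈ G.interval x z) (hx : x' ∈ G.interval y x) (hz : z' ∈ G.interval y z) :
    y ∈ G.interval x' z' := by
  have := hconn.dist_triangle (u := x) (v := x') (w := z)
  have := hconn.dist_triangle (u := x') (v := z') (w := z)
  have := hconn.dist_triangle (u := x') (v := y) (w := z')
  have := G.dist_comm (u := x) (v := y)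
  have := G.dist_comm (u := x) (v := x')
  have := G.dist_comm (u := x') (v := y)
  simp only [mem_interval] at *
  omega

end SimpleGraph

namespace IsMedianGraph

variable {G : SimpleGraph V} {a b u v w x y z : V}

lemma mem_halfspace_or (hG : IsMedianGraph G) (hab : G.Adj a b) (v : V) :
    v ∈ G.halfspace a b ∨ v ∈ G.halfspace b a := by
  obtain ⟨m, ⟨hva, hvb, hab'⟩, -⟩ := hG.2 v a b
  have h₁ := dist_eq_one_iff_adj.mpr hab
  have h₂ := dist_eq_one_iff_adj.mpr hab.symm
  obtain h | h : G.dist a m = 0 ∨ G.dist m b = 0 := by omega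
  · obtain rfl := hG.1.dist_eq_zero_iff.mp h
    exact Or.inl (by rw [mem_halfspace]; omega)
  · obtain rfl := hG.1.dist_eq_zero_iff.mp h
    exact Or.inr (by rw [mem_halfspace]; omega)

lemma dist_eq_two_of_adj_of_adj (hG : IsMedianGraph G) (hxu : G.Adj x u) (hxv : G.Adj x v)
    (hne : u ≠ v) :
    G.dist u v = 2 := by
  have hnadj : ¬ G.Adj u v := fun huv => by
    have := hG.mem_halfspace_or huv x
    rw [mem_halfspace, mem_halfspace, dist_eq_one_iff_adj.mpr hxu,
      dist_eq_one_iff_adj.mpr hxv] at this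
    omega
  have := hG.1.one_lt_dist_of_ne_of_not_adj hne hnadj
  have := hG.1.dist_triangle (u := u) (v := x) (w := v)
  have := dist_eq_one_iff_adj.mpr hxu.symm
  have := dist_eq_one_iff_adj.mpr hxv
  omega

lemma exists_adj_adj_of_dist_eq_two (hG : IsMedianGraph G) {k : ℕ} (hxy : G.dist x y = 2)
    (hux : G.dist u x = k) (huy : G.dist u y = k) :
    ∃ w, G.Adj x w ∧ G.Adj y w ∧ G.dist u w + 1 = k := by
  obtain ⟨m, ⟨h₁, h₂, h₃⟩, -⟩ := hG.2 x y u
  have := G.dist_comm (u := x) (v := u)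
  have := G.dist_comm (u := y) (v := u)
  have := G.dist_comm (u := u) (v := m)
  have := G.dist_comm (u := m) (v := y)
  have hxm : G.dist x m = 1 := by omega
  have hym : G.dist y m = 1 := by omega
  exact ⟨m, dist_eq_one_iff_adj.mp hxm, dist_eq_one_iff_adj.mp hym, by omega⟩

lemma dist_adj_across_left (hG : IsMedianGraph G) (hx : x ∈ G.halfspace a b)
    (hy : y ∈ G.halfspace b a) (hxy : G.Adj x y) : G.dist y a = G.dist x a + 1 := by
  have ha := hG.mem_halfspace_or hxy a
  have hb := hG.mem_halfspace_or hxy b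
  have := G.dist_comm (u := a) (v := x)
  have := G.dist_comm (u := a) (v := y)
  have := G.dist_comm (u := b) (v := x)
  have := G.dist_comm (u := b) (v := y)
  simp only [mem_halfspace] at *
  omega

lemma interval_subset_halfspace (hG : IsMedianGraph G) (hab : G.Adj a b)
    (hx : x ∈ G.halfspace a b) : G.interval x a ⊆ G.halfspace a b := by
  intro t ht
  refine (hG.mem_halfspace_or hab t).resolve_right fun h => ?_
  have := hG.1.dist_triangle (u := x) (v := t) (w := b)
  simp only [mem_interval, mem_halfspace] at *
  omega

lemma mem_halfspace_of_adj_of_adj (hG : IsMedianGraph G) (hab : G.Adj a b)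
    (hx : x ∈ G.halfspace a b) (hz : z ∈ G.halfspace a b) (hxz : G.dist x z = 2)
    (hxy : G.Adj x y) (hyz : G.Adj y z) : y ∈ G.halfspace a b := by
  by_contra hy'
  have hy := (hG.mem_halfspace_or hab y).resolve_left hy'
  have hxb := hG.dist_adj_across_left hy hx hxy.symm
  have hzb := hG.dist_adj_across_left hy hz hyz
  obtain ⟨m, ⟨hxm, hma, hzm⟩, -⟩ := hG.2 x z a
  have hm := hG.interval_subset_halfspace hab hx hma
  have := dist_eq_one_iff_adj.mpr hxy
  have := dist_eq_one_iff_adj.mpr hyz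
  have := G.dist_comm (u := z) (v := y)
  simp only [mem_halfspace] at hx hz hm
  have hmy : m = y :=
    (hG.2 x z b).unique ⟨hxm, by omega, by omega⟩ ⟨by omega, by omega, by omega⟩
  exact hy' (hmy ▸ hm)

lemma mem_halfspace_of_adj_of_dist_eq (hG : IsMedianGraph G) (hab : G.Adj a b) {n : ℕ}
    (hconv : ∀ x ∈ G.halfspace a b, ∀ z ∈ G.halfspace a b, G.dist x z < n →
      G.interval x z ⊆ G.halfspace a b)
    (hx : x ∈ G.halfspace a b) (hz : z ∈ G.halfspace a b) (hxz : G.dist x z = n)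
    (hxy : G.Adj x y) (hyz : G.dist y z + 1 = n) : y ∈ G.halfspace a b := by
  by_contra hy'
  have hy := (hG.mem_halfspace_or hab y).resolve_left hy'
  have hya := hG.dist_adj_across_left hx hy hxy
  obtain ⟨μ, ⟨hxμ, hμa, hzμ⟩, -⟩ := hG.2 x z a
  have := G.dist_comm (u := z) (v := y)
  have := G.dist_comm (u := z) (v := μ)
  have hxμ₀ : G.dist x μ ≠ 0 := fun h₀ =>
    hy' (hG.interval_subset_halfspace hab hz (by rw [mem_interval]; omega))
  obtain ⟨k, hk⟩ := Nat.exists_eq_succ_of_ne_zero hxμ₀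
  obtain ⟨x₁, hxx₁, hx₁μ⟩ := hG.1.exists_adj_dist_eq hk
  have := dist_eq_one_iff_adj.mpr hxx₁
  have := hG.1.dist_triangle (u := x₁) (v := μ) (w := a)
  have := hG.1.dist_triangle (u := x₁) (v := μ) (w := z)
  have := hG.1.dist_triangle (u := x) (v := x₁) (w := a)
  have := hG.1.dist_triangle (u := x) (v := x₁) (w := z)
  have hx₁ : x₁ ∈ G.halfspace a b :=
    hG.interval_subset_halfspace hab hx (by rw [mem_interval]; omega)
  have hx₁y : G.dist x₁ y = 2 :=
    hG.dist_eq_two_of_adj_of_adj hxx₁ hxy fun h => hy' (h ▸ hx₁)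
  have := G.dist_comm (u := z) (v := x₁)
  obtain ⟨w, hx₁w, hyw, hwz⟩ :=
    hG.exists_adj_adj_of_dist_eq_two (u := z) (k := n - 1) hx₁y (by omega) (by omega)
  have := dist_eq_one_iff_adj.mpr hx₁w
  have := G.dist_comm (u := z) (v := w)
  have hw : w ∈ G.halfspace a b :=
    hconv x₁ hx₁ z hz (by omega) (by rw [mem_interval]; omega)
  have hxw : G.dist x w = 2 := hG.dist_eq_two_of_adj_of_adj hxy.symm hyw (by rintro rfl; omega)
  exact hy' (hG.mem_halfspace_of_adj_of_adj hab hx hw hxw hxy hyw)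

theorem isConvex_halfspace (hG : IsMedianGraph G) (hab : G.Adj a b) :
    G.IsConvex (G.halfspace a b) := by
  suffices h : ∀ n, ∀ x ∈ G.halfspace a b, ∀ z ∈ G.halfspace a b, G.dist x z < n →
      G.interval x z ⊆ G.halfspace a b from
    fun x hx z hz => h _ x hx z hz (Nat.lt_succ_self _)
  intro n
  induction n with
  | zero => intro x _ z _ h; omega
  | succ n ih =>
    intro x hx z hz hxz y hy
    obtain hlt | hxz := Nat.lt_succ_iff_lt_or_eq.mp hxz
    · exact ih x hx z hz hlt hy
    obtain rfl | hne := eq_or_ne x y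
    · exact hx
    obtain ⟨k, hk⟩ := Nat.exists_eq_succ_of_ne_zero (hG.1.dist_eq_zero_iff.not.mpr hne)
    obtain ⟨x₁, hxx₁, hx₁y⟩ := hG.1.exists_adj_dist_eq hk
    have := dist_eq_one_iff_adj.mpr hxx₁
    have := hG.1.dist_triangle (u := x₁) (v := y) (w := z)
    have := hG.1.dist_triangle (u := x) (v := x₁) (w := z)
    rw [mem_interval] at hy
    have hx₁ := hG.mem_halfspace_of_adj_of_dist_eq hab ih hx hz hxz hxx₁ (by omega)
    exact ih x₁ hx₁ z hz (by omega) (by rw [mem_interval]; omega)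

lemma dist_adj_across (hG : IsMedianGraph G) (hab : G.Adj a b) (hw : w ∈ G.halfspace a b)
    (hx : x ∈ G.halfspace a b) (hx' : y ∈ G.halfspace b a) (hxy : G.Adj x y) :
    G.dist w y = G.dist w x + 1 := by
  refine ((hG.mem_halfspace_or hxy w).resolve_right fun h => ?_).symm
  have hyx := dist_eq_one_iff_adj.mpr hxy.symm
  have := hG.isConvex_halfspace hab w hw x hx (show y ∈ G.interval w x by
    rw [mem_interval, hyx]; exact h)
  simp only [mem_halfspace] at this hx'
  omega

theorem isConvex_halfspaceBoundary (hG : IsMedianGraph G) (hab : G.Adj a b) :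
    G.IsConvex (G.halfspaceBoundary a b) := by
  rintro x ⟨hx, x', hxx', hx'⟩ z ⟨hz, z', hzz', hz'⟩ y hy
  have hyW := hG.isConvex_halfspace hab x hx z hz hy
  have := hG.dist_adj_across hab hyW hx hx' hxx'
  have := hG.dist_adj_across hab hyW hz hz' hzz'
  have := hG.dist_adj_across hab hx hz hz' hzz'
  have := hG.dist_adj_across hab.symm hx' hz' hz hzz'.symm
  have := hG.1.dist_triangle (u := x') (v := x) (w := z)
  have := hG.1.dist_triangle (u := x) (v := x') (w := z')
  have := dist_eq_one_iff_adj.mpr hxx'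
  have := G.dist_comm (u := x) (v := x')
  have := G.dist_comm (u := x') (v := y)
  have := G.dist_comm (u := z) (v := x)
  have := G.dist_comm (u := x) (v := y)
  obtain ⟨μ, ⟨h₁, h₂, h₃⟩, -⟩ := hG.2 x' y z'
  have := G.dist_comm (u := μ) (v := y)
  rw [mem_interval] at hy
  have hyμ : G.dist y μ = 1 := by omega
  refine ⟨hyW, μ, dist_eq_one_iff_adj.mp hyμ,
    (hG.mem_halfspace_or hab μ).resolve_left fun hμ => ?_⟩
  have := hG.dist_adj_across hab hμ hx hx' hxx'
  have := hG.dist_adj_across hab hμ hz hz' hzz'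
  have := hG.1.dist_triangle (u := x) (v := μ) (w := z)
  have := G.dist_comm (u := x') (v := μ)
  have := G.dist_comm (u := x) (v := μ)
  omega

lemma exists_mem_halfspaceBoundary_mem_interval (hG : IsMedianGraph G) (hab : G.Adj a b)
    (hv : v ∈ G.wallCarrier a b) :
    ∃ v' ∈ G.halfspaceBoundary a b, ∀ w ∈ G.halfspace a b, v' ∈ G.interval w v := by
  rcases hv with hv | ⟨hvW, u, hvu, huW⟩
  · exact ⟨v, hv, fun w _ => by simp [mem_interval]⟩
  · refine ⟨u, ⟨huW, v, hvu.symm, hvW⟩, fun w hw => ?_⟩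
    rw [mem_interval, dist_eq_one_iff_adj.mpr hvu.symm, hG.dist_adj_across hab hw huW hvW hvu.symm]

lemma mem_halfspaceBoundary_of_mem_interval (hG : IsMedianGraph G) (hab : G.Adj a b)
    (hx : x ∈ G.wallCarrier a b) (hz : z ∈ G.wallCarrier a b) (hy : y ∈ G.interval x z)
    (hyW : y ∈ G.halfspace a b) : y ∈ G.halfspaceBoundary a b := by
  obtain ⟨x', hx', hxx'⟩ := hG.exists_mem_halfspaceBoundary_mem_interval hab hx
  obtain ⟨z', hz', hzz'⟩ := hG.exists_mem_halfspaceBoundary_mem_interval hab hz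
  exact hG.isConvex_halfspaceBoundary hab x' hx' z' hz'
    (hG.1.mem_interval_of_mem_interval hy (hxx' y hyW) (hzz' y hyW))

theorem isConvex_wallCarrier (hG : IsMedianGraph G) (hab : G.Adj a b) :
    G.IsConvex (G.wallCarrier a b) := by
  intro x hx z hz y hy
  rcases hG.mem_halfspace_or hab y with hyW | hyW
  · exact Or.inl (hG.mem_halfspaceBoundary_of_mem_interval hab hx hz hy hyW)
  · rw [wallCarrier_comm] at hx hz ⊢
    exact Or.inl (hG.mem_halfspaceBoundary_of_mem_interval hab.symm hx hz hy hyW)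

lemma inter_inter_nonempty (hG : IsMedianGraph G) {A B C : Set V} (hA : G.IsConvex A)
    (hB : G.IsConvex B) (hC : G.IsConvex C) (hAB : (A ∩ B).Nonempty) (hBC : (B ∩ C).Nonempty)
    (hAC : (A ∩ C).Nonempty) : (A ∩ B ∩ C).Nonempty := by
  obtain ⟨p, hpA, hpB⟩ := hAB
  obtain ⟨q, hqB, hqC⟩ := hBC
  obtain ⟨r, hrA, hrC⟩ := hAC
  obtain ⟨m, ⟨hpq, hpr, hqr⟩, -⟩ := hG.2 p q r
  exact ⟨m, ⟨hA p hpA r hrA hpr, hB p hpB q hqB hpq⟩, hC q hqC r hrC hqr⟩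

theorem exists_forall_mem_of_isConvex (hG : IsMedianGraph G) {ι : Type*} (s : Finset ι)
    (f : ι → Set V) (hconv : ∀ i ∈ s, G.IsConvex (f i))
    (hpair : ∀ i ∈ s, ∀ j ∈ s, (f i ∩ f j).Nonempty) : ∃ v, ∀ i ∈ s, v ∈ f i := by
  classical
  induction s using Finset.induction_on generalizing f with
  | empty => exact ⟨hG.1.nonempty.some, by simp⟩
  | insert a s _ ih =>
    have ha := Finset.mem_insert_self a s
    have hs {i} (hi : i ∈ s) : i ∈ insert a s := Finset.mem_insert_of_mem hi
    rcases s.eq_empty_or_nonempty with rfl | ⟨i₀, hi₀⟩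
    · obtain ⟨v, hv, -⟩ := hpair a ha a ha
      exact ⟨v, by simpa using hv⟩
    obtain ⟨v, hv⟩ := ih (fun i => f i ∩ f a)
      (fun i hi => (hconv i (hs hi)).inter (hconv a ha))
      (fun i hi j hj => by
        obtain ⟨m, ⟨hmi, hmj⟩, hma⟩ := hG.inter_inter_nonempty (hconv i (hs hi))
          (hconv j (hs hj)) (hconv a ha) (hpair i (hs hi) j (hs hj)) (hpair j (hs hj) a ha)
          (hpair i (hs hi) a ha)
        exact ⟨m, ⟨hmi, hma⟩, hmj, hma⟩)
    refine ⟨v, fun j hj => ?_⟩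
    rcases Finset.mem_insert.mp hj with rfl | hj
    · exact (hv i₀ hi₀).2
    · exact (hv j hj).1

lemma theta_iff (hG : IsMedianGraph G) {e f : V × V} (he : G.Adj e.1 e.2) :
    Theta G e f ↔ (f.1 ∈ G.halfspace e.1 e.2 ∧ f.2 ∈ G.halfspace e.2 e.1) ∨
      (f.1 ∈ G.halfspace e.2 e.1 ∧ f.2 ∈ G.halfspace e.1 e.2) := by
  have h₁ := hG.mem_halfspace_or he f.1
  have h₂ := hG.mem_halfspace_or he f.2
  have := G.dist_comm (u := e.1) (v := f.1)
  have := G.dist_comm (u := e.1) (v := f.2)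
  have := G.dist_comm (u := e.2) (v := f.1)
  have := G.dist_comm (u := e.2) (v := f.2)
  simp only [Theta, mem_halfspace] at *
  omega

lemma adjTo_iff_mem_wallCarrier (hG : IsMedianGraph G) {e : V × V} (he : G.Adj e.1 e.2) (v : V) :
    AdjTo G {f | G.Adj f.1 f.2 ∧ Theta G e f} v ↔ v ∈ G.wallCarrier e.1 e.2 := by
  constructor
  · rintro ⟨f, ⟨hf, hθ⟩, rfl | rfl⟩ <;>
      rcases (hG.theta_iff he).mp hθ with ⟨h₁, h₂⟩ | ⟨h₁, h₂⟩
    · exact Or.inl ⟨h₁, f.2, hf, h₂⟩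
    · exact Or.inr ⟨h₁, f.2, hf, h₂⟩
    · exact Or.inr ⟨h₂, f.1, hf.symm, h₁⟩
    · exact Or.inl ⟨h₂, f.1, hf.symm, h₁⟩
  · rintro (⟨hv, u, hvu, hu⟩ | ⟨hv, u, hvu, hu⟩)
    · exact ⟨(v, u), ⟨hvu, (hG.theta_iff he).mpr (Or.inl ⟨hv, hu⟩)⟩, Or.inl rfl⟩
    · exact ⟨(v, u), ⟨hvu, (hG.theta_iff he).mpr (Or.inr ⟨hv, hu⟩)⟩, Or.inl rfl⟩

theorem isConvex_adjTo (hG : IsMedianGraph G) {h : Set (V × V)} (hh : IsHyperplane G h) :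
    G.IsConvex {v | AdjTo G h v} := by
  obtain ⟨e, he, rfl⟩ := hh
  rw [show {v | AdjTo G _ v} = G.wallCarrier e.1 e.2 from
    Set.ext (hG.adjTo_iff_mem_wallCarrier he)]
  exact hG.isConvex_wallCarrier he

lemma exists_adjTo (hG : IsMedianGraph G) {h : Set (V × V)} (hh : IsHyperplane G h) :
    ∃ v, AdjTo G h v := by
  obtain ⟨e, he, rfl⟩ := hh
  exact ⟨e.1, (hG.adjTo_iff_mem_wallCarrier he e.1).mpr
    (Or.inl ⟨left_mem_halfspace he, e.2, he, left_mem_halfspace he.symm⟩)⟩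

end IsMedianGraph

/-- every finite clique in the contact graph of a CAT(0) cube complex is
contained in `Wv G v` for some vertex `v`. -/
theorem finite_clique_in_Wv (G : SimpleGraph V) (hG : IsMedianGraph G)
    (C : Set (Set (V × V))) (hfin : C.Finite) (hC : IsContactClique G C) :
    ∃ v : V, ∀ h ∈ C, AdjTo G h v := by
  have hmem {h} : h ∈ hfin.toFinset → h ∈ C := hfin.mem_toFinset.mp
  obtain ⟨v, hv⟩ := hG.exists_forall_mem_of_isConvex hfin.toFinset (fun h => {v | AdjTo G h v})
    (fun h hh => hG.isConvex_adjTo (hC.1 h (hmem hh)))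
    (fun h hh h' hh' => by
      by_cases hne : h = h'
      · subst hne
        rw [Set.inter_self]
        exact hG.exists_adjTo (hC.1 h (hmem hh))
      · exact hC.2 h (hmem hh) h' (hmem hh') hne)
  exact ⟨v, fun h hh => hv h (hfin.mem_toFinset.mpr hh)⟩
end

section
/- Let Γ be a finite graph that is not a cone, and suppose no two vertices of Γ have the same link. Then every isometry of the right-angled Artin group A_Γ with the word metric d_w (i.e. every cubical automorphism of the universal cover of the Salvetti complex) is also an isometry of A_Γ with the syllable metric d_r. -/
open SimpleGraph

/-- Relations of the right-angled Artin group `A_Γ`: commutators of adjacent generators. -/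
def raagRels (A : Type*) (Γ : SimpleGraph A) : Set (FreeGroup A) :=
  {x | ∃ a b : A, Γ.Adj a b ∧
    x = FreeGroup.of a * FreeGroup.of b * (FreeGroup.of a)⁻¹ * (FreeGroup.of b)⁻¹}

/-- The right-angled Artin group `A_Γ`. -/
abbrev RAAG (A : Type*) (Γ : SimpleGraph A) := PresentedGroup (raagRels A Γ)

/-- The standard generator of `A_Γ` corresponding to the vertex `a` of `Γ`. -/
def raagGen {A : Type*} (Γ : SimpleGraph A) (a : A) : RAAG A Γ :=
  PresentedGroup.of a

/-- The Cayley graph of `A_Γ` w.r.t. the standard generators: the 1-skeleton of the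
universal cover of the Salvetti complex. Its graph metric is the word metric `d_w`. -/
def wordGraph (A : Type*) (Γ : SimpleGraph A) : SimpleGraph (RAAG A Γ) :=
  SimpleGraph.fromRel (fun g h => ∃ a : A, h = g * raagGen Γ a)

/-- The Cayley graph of `A_Γ` w.r.t. all powers of standard generators: its graph metric
is the syllable metric `d_r` (the largest metric with `d_r(x,y) = 1` whenever `x ≠ y` lie
on a common standard geodesic). -/
def syllGraph (A : Type*) (Γ : SimpleGraph A) : SimpleGraph (RAAG A Γ) :=
  SimpleGraph.fromRel (fun g h => ∃ (a : A) (n : ℤ), h = g * raagGen Γ a ^ n)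

/-- The standard geodesic through `x` in the direction of the generator `a`. -/
def stdGeo {A : Type*} (Γ : SimpleGraph A) (x : RAAG A Γ) (a : A) : Set (RAAG A Γ) :=
  {y | ∃ n : ℤ, y = x * raagGen Γ a ^ n}

/-- `Γ` is a cone over one of its vertices. -/
def GraphIsCone {A : Type*} (Γ : SimpleGraph A) : Prop :=
  ∃ a : A, ∀ b : A, b ≠ a → Γ.Adj a b

/-- `f` is an isometry of `A_Γ` with the syllable metric `d_r`. -/
def IsSyllIsom {A : Type*} (Γ : SimpleGraph A) (f : RAAG A Γ ≃ RAAG A Γ) : Prop :=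
  ∀ x y : RAAG A Γ, (syllGraph A Γ).dist (f x) (f y) = (syllGraph A Γ).dist x y

/-- `f` induces the identity automorphism of the extension graph `Γ^e`: it takes every
standard geodesic to a parallel standard geodesic, i.e. one with the same associated
vertex of `Γ^e` (the conjugate `x (of a) x⁻¹` of a standard generator). -/
def InducesIdOnExtensionGraph {A : Type*} (Γ : SimpleGraph A)
    (f : RAAG A Γ ≃ RAAG A Γ) : Prop :=
  ∀ (x : RAAG A Γ) (a : A), ∃ (y : RAAG A Γ) (b : A),
    f '' stdGeo Γ x a = stdGeo Γ y b ∧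
    y * raagGen Γ b * y⁻¹ = x * raagGen Γ a * x⁻¹

namespace RaagAux

variable {A : Type*} {Γ : SimpleGraph A}

/-! ### Algebraic lemmas -/

/-- Abelianization homomorphism. -/
noncomputable def ab (Γ : SimpleGraph A) : RAAG A Γ →* Multiplicative (A →₀ ℤ) :=
  PresentedGroup.toGroup (f := fun a => Multiplicative.ofAdd (Finsupp.single a 1))
    (by
      rintro r ⟨a, b, hab, rfl⟩
      simp only [map_mul, map_inv, FreeGroup.lift_apply_of]
      exact commutatorElement_eq_one_iff_commute.mpr (Commute.all _ _))

lemma ab_gen (a : A) : ab Γ (raagGen Γ a) = Multiplicative.ofAdd (Finsupp.single a 1) :=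
  PresentedGroup.toGroup.of _

lemma ab_gen_zpow (a : A) (n : ℤ) :
    ab Γ (raagGen Γ a ^ n) = Multiplicative.ofAdd (Finsupp.single a n) := by
  rw [map_zpow, ab_gen, ← ofAdd_zsmul, Finsupp.smul_single, smul_eq_mul, mul_one]

lemma gen_zpow_ne_one (a : A) {n : ℤ} (hn : n ≠ 0) : raagGen Γ a ^ n ≠ 1 := by
  intro h
  have := congrArg (ab Γ) h
  rw [ab_gen_zpow, map_one] at this
  have h2 : (Finsupp.single a n : A →₀ ℤ) = 0 := by
    have := congrArg Multiplicative.toAdd this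
    simpa using this
  exact hn (by simpa using (Finsupp.single_eq_zero).mp h2)

/-- Adjacent generators commute. -/
lemma adj_commute {a b : A} (h : Γ.Adj a b) : Commute (raagGen Γ a) (raagGen Γ b) := by
  have hr : (FreeGroup.of a * FreeGroup.of b * (FreeGroup.of a)⁻¹ * (FreeGroup.of b)⁻¹)
      ∈ raagRels A Γ := ⟨a, b, h, rfl⟩
  have h1 : PresentedGroup.mk (raagRels A Γ)
      (FreeGroup.of a * FreeGroup.of b * (FreeGroup.of a)⁻¹ * (FreeGroup.of b)⁻¹) = 1 := by
    apply (QuotientGroup.eq_one_iff _).mpr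
    exact Subgroup.subset_normalClosure hr
  simp only [map_mul, map_inv] at h1
  exact commutatorElement_eq_one_iff_commute.mp h1

/-- Non-adjacent distinct generators do not commute. -/
lemma not_commute {a b : A} (hab : a ≠ b) (hna : ¬ Γ.Adj a b) :
    ¬ Commute (raagGen Γ a) (raagGen Γ b) := by
  classical
  intro hc
  let F : A → FreeGroup Bool := fun c =>
    if c = a then FreeGroup.of true else if c = b then FreeGroup.of false else 1
  have hrels : ∀ r ∈ raagRels A Γ, (FreeGroup.lift F) r = 1 := by
    rintro r ⟨c, d, hcd, rfl⟩
    simp only [map_mul, map_inv, FreeGroup.lift_apply_of]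
    apply commutatorElement_eq_one_iff_commute.mpr
    have hne : c ≠ d := hcd.ne
    by_cases h1 : c = a
    · by_cases h2 : d = b
      · exact absurd (h1 ▸ h2 ▸ hcd) hna
      · by_cases h3 : d = a
        · exact absurd (h1 ▸ h3 ▸ hne) (by simp)
        · simp [F, h1, h2, h3]
    · by_cases h2 : c = b
      · by_cases h3 : d = a
        · exact absurd (h3 ▸ h2 ▸ hcd) (fun h => hna h.symm)
        · by_cases h4 : d = b
          · exact absurd (h2 ▸ h4 ▸ hne) (by simp)
          · simp [F, h1, h2, h3, h4]
      · simp [F, h1, h2]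
  let p : RAAG A Γ →* FreeGroup Bool := PresentedGroup.toGroup hrels
  have pa : p (raagGen Γ a) = FreeGroup.of true := by
    rw [show p (raagGen Γ a) = F a from PresentedGroup.toGroup.of hrels]; simp [F]
  have pb : p (raagGen Γ b) = FreeGroup.of false := by
    rw [show p (raagGen Γ b) = F b from PresentedGroup.toGroup.of hrels]
    simp [F, Ne.symm hab]
  have := congrArg p hc
  simp only [map_mul, pa, pb] at this
  exact absurd this (by decide)

lemma pair_eq {a e c f : A} {ε κ σ μ : ℤ}
    (hε : ε = 1 ∨ ε = -1) (hκ : κ = 1 ∨ κ = -1) (hσ : σ = 1 ∨ σ = -1) (hμ : μ = 1 ∨ μ = -1)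
    (h : Finsupp.single a ε + Finsupp.single e κ = Finsupp.single c σ + Finsupp.single f μ) :
    (e = a ∧ κ = -ε ∧ f = c ∧ μ = -σ) ∨ (c = a ∧ σ = ε ∧ f = e ∧ μ = κ) ∨
    (f = a ∧ μ = ε ∧ c = e ∧ σ = κ) := by
  classical
  have eval : ∀ x : A, (if a = x then ε else 0) + (if e = x then κ else 0)
      = (if c = x then σ else 0) + (if f = x then μ else 0) := by
    intro x
    have := DFunLike.congr_fun h x
    simpa [Finsupp.single_apply] using this
  by_cases hea : e = a
  · by_cases hcf : c = f
    · by_cases hca : c = a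
      · have hfa : f = a := hcf.symm.trans hca
        have h1 := eval a
        simp [hea, hca, hfa] at h1
        rcases (by omega : (κ = -ε ∧ μ = -σ) ∨ (σ = ε ∧ μ = κ)) with ⟨h3, h4⟩ | ⟨h3, h4⟩
        · exact Or.inl ⟨hea, h3, hcf.symm, h4⟩
        · exact Or.inr (Or.inl ⟨hca, h3, hfa.trans hea.symm, h4⟩)
      · have hfa : ¬ f = a := fun hh => hca (hcf.trans hh)
        have hfc : f = c := hcf.symm
        have h1 := eval a
        simp [hea, hca, hfa] at h1
        have h2 := eval c
        simp [show ¬ a = c from fun hh => hca hh.symm,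
          show ¬ e = c from fun hh => hca (hh.symm.trans hea), hfc] at h2
        exact Or.inl ⟨hea, by omega, hfc, by omega⟩
    · have hfc : ¬ f = c := fun hh => hcf hh.symm
      have h2 := eval c
      by_cases hac : a = c
      · simp [hac, hea.trans hac, hfc] at h2
        omega
      · simp [hac, show ¬ e = c from fun hh => hac (hea.symm.trans hh), hfc] at h2
        omega
  · by_cases hcf : c = f
    · have h1 := eval a
      by_cases hca : c = a
      · simp [hea, hca, hcf.symm.trans hca] at h1
        omega
      · simp [hea, hca, show ¬ f = a from fun hh => hca (hcf.trans hh)] at h1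
        omega
    · by_cases hca : c = a
      · have hfa : ¬ f = a := fun hh => hcf (hca.trans hh.symm)
        have h1 := eval a
        simp [hea, hca, hfa] at h1
        have h2 := eval e
        simp [show ¬ a = e from fun hh => hea hh.symm,
          show ¬ c = e from fun hh => hea (hca.symm.trans hh).symm] at h2
        by_cases hfe : f = e
        · simp [hfe] at h2
          exact Or.inr (Or.inl ⟨hca, h1.symm, hfe, h2.symm⟩)
        · simp [hfe] at h2; omega
      · have h1 := eval a
        by_cases hfa : f = a
        · simp [hea, hca, hfa] at h1
          have h2 := eval e
          simp [show ¬ a = e from fun hh => hea hh.symm,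
            show ¬ f = e from fun hh => hea (hfa.symm.trans hh).symm] at h2
          by_cases hce : c = e
          · simp [hce] at h2
            exact Or.inr (Or.inr ⟨hfa, h1.symm, hce, h2.symm⟩)
          · simp [hce] at h2; omega
        · simp [hea, hca, hfa] at h1
          omega

lemma commute_of_pm {G : Type*} [Group G] {x y : G} {m n : ℤ}
    (hm : m = 1 ∨ m = -1) (hn : n = 1 ∨ n = -1)
    (h : x ^ m * y ^ n = y ^ n * x ^ m) : Commute x y := by
  have h' : Commute (x ^ m) (y ^ n) := h
  rcases hm with rfl | rfl <;> rcases hn with rfl | rfl <;>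
    simp only [zpow_one, zpow_neg, Commute.inv_left_iff, Commute.inv_right_iff] at h' <;>
    exact h'

lemma ab_eq {a e c f : A} {ε κ σ μ : ℤ}
    (h : raagGen Γ a ^ ε * raagGen Γ e ^ κ = raagGen Γ c ^ σ * raagGen Γ f ^ μ) :
    Finsupp.single a ε + Finsupp.single e κ = Finsupp.single c σ + Finsupp.single f μ := by
  have h2 := congrArg (ab Γ) h
  simp only [map_mul, ab_gen_zpow, ← ofAdd_add] at h2
  exact Multiplicative.ofAdd.injective h2

lemma gen_zpow_eq {a c : A} {ε σ : ℤ} (hε : ε ≠ 0)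
    (h : raagGen Γ a ^ ε = raagGen Γ c ^ σ) : a = c ∧ ε = σ := by
  have h2 := congrArg (ab Γ) h
  simp only [ab_gen_zpow] at h2
  have h3 : (Finsupp.single a ε : A →₀ ℤ) = Finsupp.single c σ :=
    Multiplicative.ofAdd.injective h2
  rcases Finsupp.single_eq_single_iff _ _ _ _ |>.mp h3 with ⟨h4, h5⟩ | ⟨h4, _⟩
  · exact ⟨h4, h5⟩
  · exact absurd h4 hε

lemma gen_mul_zpow_ne_one {a c : A} {ε σ : ℤ} (hac : a ≠ c) (hε : ε ≠ 0)
    (h : raagGen Γ a ^ ε * raagGen Γ c ^ σ = 1) : False := by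
  have h2 := congrArg (ab Γ) h
  simp only [map_mul, ab_gen_zpow, ← ofAdd_add, map_one] at h2
  have h3 : (Finsupp.single a ε + Finsupp.single c σ : A →₀ ℤ) = 0 := by
    have := congrArg Multiplicative.toAdd h2
    simpa using this
  have h4 := DFunLike.congr_fun h3 a
  simp [Finsupp.single_apply, show ¬ c = a from fun hh => hac hh.symm] at h4
  exact hε h4

/-- Master lemma: classification of equalities `g_a^ε g_e^κ = g_c^σ g_f^μ`. -/
lemma eqn2 {a e c f : A} {ε κ σ μ : ℤ}
    (hε : ε = 1 ∨ ε = -1) (hκ : κ = 1 ∨ κ = -1) (hσ : σ = 1 ∨ σ = -1) (hμ : μ = 1 ∨ μ = -1)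
    (h : raagGen Γ a ^ ε * raagGen Γ e ^ κ = raagGen Γ c ^ σ * raagGen Γ f ^ μ) :
    (e = a ∧ κ = -ε ∧ f = c ∧ μ = -σ) ∨ (c = a ∧ σ = ε ∧ f = e ∧ μ = κ) ∨
    (f = a ∧ μ = ε ∧ c = e ∧ σ = κ ∧ a ≠ e ∧ Γ.Adj a e) := by
  rcases pair_eq hε hκ hσ hμ (ab_eq h) with H | H | ⟨hfa, hμε, hce, hσκ⟩
  · exact Or.inl H
  · exact Or.inr (Or.inl H)
  · by_cases hea : e = a
    · have hca : c = a := hce.trans hea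
      rcases (by omega : κ = -ε ∨ κ = ε) with h5 | h5
      · exact Or.inl ⟨hea, h5, hfa.trans hca.symm, by omega⟩
      · exact Or.inr (Or.inl ⟨hca, by omega, hfa.trans hea.symm, by omega⟩)
    · have hcomm : raagGen Γ a ^ ε * raagGen Γ e ^ κ = raagGen Γ e ^ κ * raagGen Γ a ^ ε := by
        rw [h, hce, hσκ, hfa, hμε]
      have hc := commute_of_pm hε hκ hcomm
      by_cases hadj : Γ.Adj a e
      · exact Or.inr (Or.inr ⟨hfa, hμε, hce, hσκ, fun hh => hea hh.symm, hadj⟩)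
      · exact absurd hc (not_commute (fun hh => hea hh.symm) hadj)

/-! ### The word graph -/

lemma word_adj_iff {x y : RAAG A Γ} :
    (wordGraph A Γ).Adj x y ↔
      ∃ (a : A) (ε : ℤ), (ε = 1 ∨ ε = -1) ∧ y = x * raagGen Γ a ^ ε := by
  rw [wordGraph, SimpleGraph.fromRel_adj]
  constructor
  · rintro ⟨hne, ⟨a, rfl⟩ | ⟨a, rfl⟩⟩
    · exact ⟨a, 1, Or.inl rfl, by simp⟩
    · exact ⟨a, -1, Or.inr rfl, by group⟩
  · rintro ⟨a, ε, hε, rfl⟩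
    refine ⟨?_, ?_⟩
    · intro hh
      exact gen_zpow_ne_one a (n := ε) (by omega) (left_eq_mul.mp hh)
    · rcases hε with rfl | rfl
      · exact Or.inl ⟨a, by simp⟩
      · exact Or.inr ⟨a, by group⟩

lemma shift (p : RAAG A Γ) (a : A) (m k : ℤ) :
    p * raagGen Γ a ^ m * raagGen Γ a ^ k = p * raagGen Γ a ^ (m + k) := by
  rw [mul_assoc, ← zpow_add]

/-- `u, v` span a square with corner `x`. -/
def Sq (Γ : SimpleGraph A) (x u v : RAAG A Γ) : Prop :=
  (wordGraph A Γ).Adj x u ∧ (wordGraph A Γ).Adj x v ∧ u ≠ v ∧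
    ∃ z, z ≠ x ∧ (wordGraph A Γ).Adj u z ∧ (wordGraph A Γ).Adj v z

lemma sq_iff {x : RAAG A Γ} {a c : A} {ε σ : ℤ}
    (hε : ε = 1 ∨ ε = -1) (hσ : σ = 1 ∨ σ = -1) :
    Sq Γ x (x * raagGen Γ a ^ ε) (x * raagGen Γ c ^ σ) ↔ (a ≠ c ∧ Γ.Adj a c) := by
  constructor
  · rintro ⟨-, -, huv, z, hzx, hu, hv⟩
    obtain ⟨e, κ, hκ, hz1⟩ := word_adj_iff.mp hu
    obtain ⟨f, μ, hμ, hz2⟩ := word_adj_iff.mp hv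
    have heq : raagGen Γ a ^ ε * raagGen Γ e ^ κ = raagGen Γ c ^ σ * raagGen Γ f ^ μ := by
      have := hz1.symm.trans hz2
      rw [mul_assoc, mul_assoc] at this
      exact mul_left_cancel this
    rcases eqn2 hε hκ hσ hμ heq with ⟨h1, h2, -, -⟩ | ⟨h1, h2, -, -⟩ | ⟨-, -, h3, -, h5, h6⟩
    · exfalso
      apply hzx
      rw [hz1, h1, h2, shift]
      simp
    · exfalso
      apply huv
      rw [h1, h2]
    · exact ⟨fun hh => h5 (hh.trans h3), h3 ▸ h6⟩
  · rintro ⟨hac, hadj⟩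
    refine ⟨word_adj_iff.mpr ⟨a, ε, hε, rfl⟩, word_adj_iff.mpr ⟨c, σ, hσ, rfl⟩, ?_, ?_⟩
    · intro hh
      have : raagGen Γ a ^ ε = raagGen Γ c ^ σ := mul_left_cancel hh
      exact hac (gen_zpow_eq (by omega) this).1
    · refine ⟨x * raagGen Γ a ^ ε * raagGen Γ c ^ σ, ?_, ?_, ?_⟩
      · intro hh
        rw [mul_assoc] at hh
        exact gen_mul_zpow_ne_one (ε := ε) hac (by omega) (left_eq_mul.mp hh.symm)
      · exact word_adj_iff.mpr ⟨c, σ, hσ, rfl⟩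
      · apply word_adj_iff.mpr
        refine ⟨a, ε, hε, ?_⟩
        rw [mul_assoc, mul_assoc, ((adj_commute hadj).zpow_zpow ε σ).eq]

/-- `u` and `v` are distinct neighbors of `x` spanning no square, with the same square-link. -/
def SL (Γ : SimpleGraph A) (x u v : RAAG A Γ) : Prop :=
  (wordGraph A Γ).Adj x u ∧ (wordGraph A Γ).Adj x v ∧ u ≠ v ∧ ¬ Sq Γ x u v ∧
    ∀ w, (wordGraph A Γ).Adj x w → (Sq Γ x u w ↔ Sq Γ x v w)

lemma sl_holds {x : RAAG A Γ} {a : A} {ε : ℤ} (hε : ε = 1 ∨ ε = -1) :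
    SL Γ x (x * raagGen Γ a ^ ε) (x * raagGen Γ a ^ (-ε)) := by
  refine ⟨word_adj_iff.mpr ⟨a, ε, hε, rfl⟩, word_adj_iff.mpr ⟨a, -ε, by omega, rfl⟩, ?_, ?_, ?_⟩
  · intro hh
    have h2 := (gen_zpow_eq (Γ := Γ) (a := a) (c := a) (by omega) (mul_left_cancel hh)).2
    omega
  · rw [sq_iff hε (by omega : -ε = 1 ∨ -ε = -1)]
    rintro ⟨hh, -⟩; exact hh rfl
  · intro w hw
    obtain ⟨d, τ, hτ, rfl⟩ := word_adj_iff.mp hw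
    rw [sq_iff hε hτ, sq_iff (by omega : -ε = 1 ∨ -ε = -1) hτ]

lemma sl_char (hlink : ∀ a b : A, Γ.neighborSet a = Γ.neighborSet b → a = b)
    {x v : RAAG A Γ} {a : A} {ε : ℤ} (hε : ε = 1 ∨ ε = -1)
    (h : SL Γ x (x * raagGen Γ a ^ ε) v) : v = x * raagGen Γ a ^ (-ε) := by
  obtain ⟨-, hxv, huv, hnsq, hall⟩ := h
  obtain ⟨c, σ, hσ, rfl⟩ := word_adj_iff.mp hxv
  by_cases hca : c = a
  · subst hca
    have h1 : ¬ (ε = σ) := fun hh => huv (by rw [hh])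
    have h2 : σ = -ε := by omega
    rw [h2]
  · exfalso
    have hac : a ≠ c := fun hh => hca hh.symm
    have hnadj : ¬ Γ.Adj a c := fun hh => hnsq ((sq_iff hε hσ).mpr ⟨hac, hh⟩)
    apply hac
    apply hlink a c
    ext d
    simp only [SimpleGraph.mem_neighborSet]
    constructor
    · intro hd
      have hw : (wordGraph A Γ).Adj x (x * raagGen Γ d ^ (1:ℤ)) :=
        word_adj_iff.mpr ⟨d, 1, Or.inl rfl, rfl⟩
      have h2 := (hall _ hw).mp ((sq_iff hε (Or.inl rfl)).mpr ⟨hd.ne, hd⟩)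
      exact ((sq_iff hσ (Or.inl rfl)).mp h2).2
    · intro hd
      have hw : (wordGraph A Γ).Adj x (x * raagGen Γ d ^ (1:ℤ)) :=
        word_adj_iff.mpr ⟨d, 1, Or.inl rfl, rfl⟩
      have h2 := (hall _ hw).mpr ((sq_iff hσ (Or.inl rfl)).mpr ⟨hd.ne, hd⟩)
      exact ((sq_iff hε (Or.inl rfl)).mp h2).2

/-! ### Transport along a word-graph automorphism -/

lemma sq_map (φ : RAAG A Γ ≃ RAAG A Γ)
    (hA : ∀ x y, (wordGraph A Γ).Adj x y ↔ (wordGraph A Γ).Adj (φ x) (φ y))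
    {x u v : RAAG A Γ} (h : Sq Γ x u v) : Sq Γ (φ x) (φ u) (φ v) := by
  obtain ⟨h1, h2, h3, z, hz1, hz2, hz3⟩ := h
  exact ⟨(hA _ _).mp h1, (hA _ _).mp h2, fun hh => h3 (φ.injective hh), φ z,
    fun hh => hz1 (φ.injective hh), (hA _ _).mp hz2, (hA _ _).mp hz3⟩

lemma hA_symm (φ : RAAG A Γ ≃ RAAG A Γ)
    (hA : ∀ x y, (wordGraph A Γ).Adj x y ↔ (wordGraph A Γ).Adj (φ x) (φ y)) :
    ∀ x y, (wordGraph A Γ).Adj x y ↔ (wordGraph A Γ).Adj (φ.symm x) (φ.symm y) := by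
  intro x y
  conv_lhs => rw [← φ.apply_symm_apply x, ← φ.apply_symm_apply y]
  exact (hA _ _).symm

lemma sq_iff_map (φ : RAAG A Γ ≃ RAAG A Γ)
    (hA : ∀ x y, (wordGraph A Γ).Adj x y ↔ (wordGraph A Γ).Adj (φ x) (φ y))
    {x u v : RAAG A Γ} : Sq Γ (φ x) (φ u) (φ v) ↔ Sq Γ x u v := by
  constructor
  · intro h
    have := sq_map φ.symm (hA_symm φ hA) h
    simpa using this
  · exact sq_map φ hA

lemma sl_map (φ : RAAG A Γ ≃ RAAG A Γ)
    (hA : ∀ x y, (wordGraph A Γ).Adj x y ↔ (wordGraph A Γ).Adj (φ x) (φ y))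
    {x u v : RAAG A Γ} (h : SL Γ x u v) : SL Γ (φ x) (φ u) (φ v) := by
  obtain ⟨h1, h2, h3, h4, h5⟩ := h
  refine ⟨(hA _ _).mp h1, (hA _ _).mp h2, fun hh => h3 (φ.injective hh),
    fun hh => h4 ((sq_iff_map φ hA).mp hh), ?_⟩
  intro w hw
  have hw' : (wordGraph A Γ).Adj x (φ.symm w) := by
    rw [hA x (φ.symm w)]
    simpa using hw
  constructor
  · intro hs
    rw [← φ.apply_symm_apply w] at hs
    have := sq_map φ hA ((h5 _ hw').mp ((sq_iff_map φ hA).mp hs))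
    simpa using this
  · intro hs
    rw [← φ.apply_symm_apply w] at hs
    have := sq_map φ hA ((h5 _ hw').mpr ((sq_iff_map φ hA).mp hs))
    simpa using this

lemma sl_step (hlink : ∀ a b : A, Γ.neighborSet a = Γ.neighborSet b → a = b)
    (φ : RAAG A Γ ≃ RAAG A Γ)
    (hA : ∀ x y, (wordGraph A Γ).Adj x y ↔ (wordGraph A Γ).Adj (φ x) (φ y))
    {p : RAAG A Γ} {a b : A} {ε η : ℤ} (hε : ε = 1 ∨ ε = -1) (hη : η = 1 ∨ η = -1)
    (hq : φ (p * raagGen Γ a ^ (-ε)) = φ p * raagGen Γ b ^ (-η)) :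
    φ (p * raagGen Γ a ^ ε) = φ p * raagGen Γ b ^ η := by
  have hsl := sl_holds (Γ := Γ) (x := p) (a := a) (ε := -ε) (by omega)
  rw [neg_neg] at hsl
  have hsl' := sl_map φ hA hsl
  rw [hq] at hsl'
  have := sl_char hlink (by omega : -η = 1 ∨ -η = -1) hsl'
  rw [neg_neg] at this
  exact this

lemma sl_step' (hlink : ∀ a b : A, Γ.neighborSet a = Γ.neighborSet b → a = b)
    (φ : RAAG A Γ ≃ RAAG A Γ)
    (hA : ∀ x y, (wordGraph A Γ).Adj x y ↔ (wordGraph A Γ).Adj (φ x) (φ y))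
    {x : RAAG A Γ} {a b : A} {m k ε η : ℤ} (hε : ε = 1 ∨ ε = -1) (hη : η = 1 ∨ η = -1)
    (h1 : φ (x * raagGen Γ a ^ m) = φ x * raagGen Γ b ^ k)
    (h0 : φ (x * raagGen Γ a ^ (m - ε)) = φ x * raagGen Γ b ^ (k - η)) :
    φ (x * raagGen Γ a ^ (m + ε)) = φ x * raagGen Γ b ^ (k + η) := by
  have hq : φ ((x * raagGen Γ a ^ m) * raagGen Γ a ^ (-ε))
      = φ (x * raagGen Γ a ^ m) * raagGen Γ b ^ (-η) := by
    rw [shift, h1, shift, show m + -ε = m - ε by ring, show k + -η = k - η by ring]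
    exact h0
  have h2 := sl_step hlink φ hA hε hη hq
  rw [shift, h1, shift] at h2
  exact h2

/-- A word-graph automorphism maps standard geodesics to standard geodesics. -/
lemma line (hlink : ∀ a b : A, Γ.neighborSet a = Γ.neighborSet b → a = b)
    (φ : RAAG A Γ ≃ RAAG A Γ)
    (hA : ∀ x y, (wordGraph A Γ).Adj x y ↔ (wordGraph A Γ).Adj (φ x) (φ y))
    (x : RAAG A Γ) (a : A) :
    ∃ (b : A) (η : ℤ), ∀ n : ℤ, φ (x * raagGen Γ a ^ n) = φ x * raagGen Γ b ^ (η * n) := by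
  have hadj : (wordGraph A Γ).Adj x (x * raagGen Γ a ^ (1:ℤ)) :=
    word_adj_iff.mpr ⟨a, 1, Or.inl rfl, rfl⟩
  obtain ⟨b, η, hη, heq⟩ := word_adj_iff.mp ((hA _ _).mp hadj)
  refine ⟨b, η, ?_⟩
  have pos : ∀ n : ℕ, (φ (x * raagGen Γ a ^ (n:ℤ)) = φ x * raagGen Γ b ^ (η * n)) ∧
      (φ (x * raagGen Γ a ^ ((n:ℤ) + 1)) = φ x * raagGen Γ b ^ (η * ((n:ℤ) + 1))) := by
    intro n
    induction n with
    | zero =>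
      constructor
      · norm_num
      · norm_num
        exact heq
    | succ n ih =>
      have hcast : ((n + 1 : ℕ) : ℤ) = (n : ℤ) + 1 := by push_cast; ring
      constructor
      · rw [hcast]
        exact ih.2
      · rw [hcast, show ((n:ℤ) + 1) + 1 = ((n:ℤ) + 1) + 1 from rfl]
        have := sl_step' hlink φ hA (Or.inl rfl : (1:ℤ) = 1 ∨ (1:ℤ) = -1) hη ih.2
          (by rw [show (n:ℤ) + 1 - 1 = (n:ℤ) by ring, show η * ((n:ℤ)+1) - η = η * n by ring]
              exact ih.1)
        rw [show η * ((n:ℤ) + 1 + 1) = η * ((n:ℤ)+1) + η by ring]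
        exact this
  have neg : ∀ n : ℕ, (φ (x * raagGen Γ a ^ (-(n:ℤ))) = φ x * raagGen Γ b ^ (η * (-(n:ℤ)))) ∧
      (φ (x * raagGen Γ a ^ (-(n:ℤ) + 1)) = φ x * raagGen Γ b ^ (η * (-(n:ℤ) + 1))) := by
    intro n
    induction n with
    | zero =>
      constructor
      · norm_num
      · norm_num
        exact heq
    | succ n ih =>
      have hcast : ((n + 1 : ℕ) : ℤ) = (n : ℤ) + 1 := by push_cast; ring
      constructor
      · rw [hcast]
        have := sl_step' hlink φ hA (Or.inr rfl : (-1:ℤ) = 1 ∨ (-1:ℤ) = -1)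
          (by omega : -η = 1 ∨ -η = -1) ih.1
          (by rw [show -(n:ℤ) - (-1) = -(n:ℤ) + 1 by ring,
                show η * (-(n:ℤ)) - (-η) = η * (-(n:ℤ) + 1) by ring]
              exact ih.2)
        rw [show -((n:ℤ) + 1) = -(n:ℤ) + (-1) by ring,
          show η * (-(n:ℤ) + (-1)) = η * (-(n:ℤ)) + (-η) by ring]
        exact this
      · rw [hcast, show -((n:ℤ) + 1) + 1 = -(n:ℤ) by ring]
        exact ih.1
  intro n
  obtain ⟨m, rfl | rfl⟩ := n.eq_nat_or_neg
  · exact (pos m).1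
  · exact (neg m).1

/-! ### The syllable graph -/

lemma syll_adj_iff {x y : RAAG A Γ} :
    (syllGraph A Γ).Adj x y ↔ x ≠ y ∧ ∃ (a : A) (n : ℤ), y = x * raagGen Γ a ^ n := by
  rw [syllGraph, SimpleGraph.fromRel_adj]
  constructor
  · rintro ⟨hne, ⟨a, n, rfl⟩ | ⟨a, n, rfl⟩⟩
    · exact ⟨hne, a, n, rfl⟩
    · exact ⟨hne, a, -n, by rw [shift]; simp⟩
  · rintro ⟨hne, a, n, rfl⟩
    exact ⟨hne, Or.inl ⟨a, n, rfl⟩⟩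

lemma syll_pres (hlink : ∀ a b : A, Γ.neighborSet a = Γ.neighborSet b → a = b)
    (φ : RAAG A Γ ≃ RAAG A Γ)
    (hA : ∀ x y, (wordGraph A Γ).Adj x y ↔ (wordGraph A Γ).Adj (φ x) (φ y))
    {x y : RAAG A Γ} (h : (syllGraph A Γ).Adj x y) : (syllGraph A Γ).Adj (φ x) (φ y) := by
  obtain ⟨hne, a, n, rfl⟩ := syll_adj_iff.mp h
  obtain ⟨b, η, hl⟩ := line hlink φ hA x a
  exact syll_adj_iff.mpr ⟨fun hh => hne (φ.injective hh), b, η * n, hl n⟩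

/-! ### Distance preservation -/

lemma dist_eq_of_iff {V : Type*} {G : SimpleGraph V} (φ : V ≃ V)
    (h : ∀ x y, G.Adj x y ↔ G.Adj (φ x) (φ y)) (u v : V) :
    G.dist (φ u) (φ v) = G.dist u v := by
  have hom : ∀ (ψ : V ≃ V), (∀ x y, G.Adj x y ↔ G.Adj (ψ x) (ψ y)) →
      ∀ u v : V, G.Reachable u v → G.dist (ψ u) (ψ v) ≤ G.dist u v := by
    intro ψ hψ u v hr
    obtain ⟨p, hp⟩ := hr.exists_walk_length_eq_dist
    calc G.dist (ψ u) (ψ v) ≤ (p.map ⟨ψ, fun {c d} hcd => (hψ c d).mp hcd⟩).length :=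
          SimpleGraph.dist_le _
      _ = p.length := SimpleGraph.Walk.length_map _ _
      _ = G.dist u v := hp
  have hsymm : ∀ x y, G.Adj x y ↔ G.Adj (φ.symm x) (φ.symm y) := by
    intro x y
    conv_lhs => rw [← φ.apply_symm_apply x, ← φ.apply_symm_apply y]
    exact (h _ _).symm
  by_cases hr : G.Reachable u v
  · refine le_antisymm (hom φ h u v hr) ?_
    have hr' : G.Reachable (φ u) (φ v) := by
      obtain ⟨p⟩ := hr
      exact ⟨p.map ⟨φ, fun {c d} hcd => (h c d).mp hcd⟩⟩
    have h2 := hom φ.symm hsymm (φ u) (φ v) hr'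
    simpa using h2
  · have hr' : ¬ G.Reachable (φ u) (φ v) := by
      intro hh
      obtain ⟨p⟩ := hh
      exact hr ⟨(p.map ⟨φ.symm, fun {c d} hcd => (hsymm c d).mp hcd⟩).copy
        (φ.symm_apply_apply u) (φ.symm_apply_apply v)⟩
    rw [SimpleGraph.dist_eq_zero_iff_eq_or_not_reachable.mpr (Or.inr hr'),
      SimpleGraph.dist_eq_zero_iff_eq_or_not_reachable.mpr (Or.inr hr)]

end RaagAux

/-- if the finite graph `Γ` is not a cone and no two vertices of `Γ` have
the same link, then every isometry of `A_Γ` with the word metric is also an isometry of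
`A_Γ` with the syllable metric. -/
theorem word_isometry_is_syllable_isometry {A : Type*} [Fintype A] (Γ : SimpleGraph A)
    (hnc : ¬ GraphIsCone Γ)
    (hlink : ∀ a b : A, Γ.neighborSet a = Γ.neighborSet b → a = b) :
    ∀ f : RAAG A Γ ≃ RAAG A Γ,
      (∀ x y : RAAG A Γ, (wordGraph A Γ).dist (f x) (f y) = (wordGraph A Γ).dist x y) →
      IsSyllIsom Γ f := by
  intro f hf
  have hA : ∀ x y : RAAG A Γ, (wordGraph A Γ).Adj x y ↔ (wordGraph A Γ).Adj (f x) (f y) := by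
    intro x y
    rw [← SimpleGraph.dist_eq_one_iff_adj, ← SimpleGraph.dist_eq_one_iff_adj, hf]
  have hS : ∀ x y : RAAG A Γ, (syllGraph A Γ).Adj x y ↔ (syllGraph A Γ).Adj (f x) (f y) := by
    intro x y
    constructor
    · exact RaagAux.syll_pres hlink f hA
    · intro h
      have h2 := RaagAux.syll_pres hlink f.symm (RaagAux.hA_symm f hA) h
      simpa using h2
  intro x y
  exact RaagAux.dist_eq_of_iff f hS x y
end

section
/- Let Γ be a finite graph that is not a cone. Then the natural homomorphism from the isometry group of (A_Γ, d_r) (the right-angled Artin group with the syllable metric) to the automorphism group of the extension graph Γ^e is injective. Conversely, if Γ is a cone, this homomorphism has nontrivial (indeed infinite) kernel. -/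
open SimpleGraph

/-!
If `f` induces the identity on `Γ^e`, then for every `x` and every vertex `a` the point `f x` lies
on a standard geodesic parallel to `stdGeo Γ x a`, so `f x` and `x` conjugate the generator `a` to
the same element, and `x⁻¹ * f x` is central. If `a` has a non-neighbour, `A_Γ` is the amalgam
`A_{St a} *_{A_{Lk a}} A_{Γ - a}`, in which both factors have infinite index over the base (the
exponent sums of `a` and of the non-neighbour vanish on `A_{Lk a}`). By the normal form theorem
the centre of such an amalgam lies in the base, so the centre of `A_Γ` lies in `A_{Lk a}`. When `Γ`
is not a cone this holds for every `a`, and the retractions `A_Γ → A_S` give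
`⋂ₐ A_{Lk a} = A_{⋂ₐ Lk a} = 1`. If `a` is a cone vertex, `a` is central, and right multiplication
by its powers gives infinitely many isometries of `d_r` fixing every standard geodesic up to
parallelism.
-/

open Function

theorem Subgroup.IsComplement.eq_one_of_mem_of_mem {G : Type*} [Group G] {S T : Set G}
    (hST : Subgroup.IsComplement S T) (hS : 1 ∈ S) (hT : 1 ∈ T) {g : G} (hgS : g ∈ S)
    (hgT : g ∈ T) : g = 1 :=
  congrArg Subtype.val ((hST.equiv_fst_eq_self_of_mem_of_one_mem hT hgS).symm.trans
    (hST.equiv_fst_eq_one_of_mem_of_one_mem hS hgT))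

theorem Subgroup.exists_notMem_and_inv_mul_notMem {G : Type*} [Group G] {K : Subgroup G}
    (h1 : K.index ≠ 1) (h2 : K.index ≠ 2) (k : G) : ∃ c, c ∉ K ∧ c⁻¹ * k ∉ K := by
  by_contra! hK
  by_cases hk : k ∈ K
  · refine h1 (Subgroup.index_eq_one.mpr (eq_top_iff.mpr fun c _ => ?_))
    by_contra hc
    exact hc (by simpa [hk] using K.inv_mem (K.mul_mem (hK c hc) (K.inv_mem hk)))
  · refine h2 (Subgroup.index_eq_two_iff'.mpr ⟨k⁻¹, fun b => ?_⟩)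
    by_cases hb : b ∈ K
    · exact Or.inr ⟨hb, fun hkb => hk (by simpa using K.mul_mem hb (K.inv_mem hkb))⟩
    · exact Or.inl ⟨by simpa using K.inv_mem (hK b hb), hb⟩

namespace Monoid

namespace CoprodI.NeWord

variable {ι : Type*} {G : ι → Type*} [∀ i, Group (G i)]

theorem toList_replaceHead {i j : ι} (x : G i) (hx : x ≠ 1) (w : NeWord G i j) :
    (replaceHead x hx w).toList = ⟨i, x⟩ :: w.toList.tail := by
  induction w with
  | singleton => rfl
  | append w₁ _ w₂ ih _ =>
    simp [replaceHead, ih, List.tail_append_of_ne_nil w₁.toList_ne_nil]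

theorem toList_inv {i j : ι} (w : NeWord G i j) :
    w.inv.toList = (w.toList.map fun p => ⟨p.1, p.2⁻¹⟩).reverse := by
  induction w with
  | singleton => rfl
  | append w₁ _ w₂ ih₁ ih₂ => simp [inv, ih₁, ih₂]

variable {H : Type*} [Group H] {φ : ∀ i, H →* G i}

open PushoutI

theorem reduced_singleton {i : ι} {x : G i} (hx : x ≠ 1) (hxφ : x ∉ (φ i).range) :
    Reduced φ (singleton x hx).toWord := by
  simpa [Reduced, toWord] using hxφ

theorem reduced_append {i j k l : ι} {w₁ : NeWord G i j} {hne : j ≠ k} {w₂ : NeWord G k l}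
    (h₁ : Reduced φ w₁.toWord) (h₂ : Reduced φ w₂.toWord) :
    Reduced φ (append w₁ hne w₂).toWord := by
  intro g hg
  rcases List.mem_append.mp hg with hg | hg
  exacts [h₁ g hg, h₂ g hg]

theorem reduced_inv {i j : ι} {w : NeWord G i j} (hw : Reduced φ w.toWord) :
    Reduced φ w.inv.toWord := by
  intro g (hg : g ∈ w.inv.toList)
  rw [toList_inv, List.mem_reverse] at hg
  obtain ⟨p, hp, rfl⟩ := List.mem_map.mp hg
  simpa using hw p hp

theorem reduced_mulHead {i j : ι} {w : NeWord G i j} (hw : Reduced φ w.toWord) {x : G i}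
    (hx : x * w.head ≠ 1) (hxφ : x * w.head ∉ (φ i).range) :
    Reduced φ (w.mulHead x hx).toWord := by
  intro g (hg : g ∈ (replaceHead _ hx w).toList)
  rcases List.mem_cons.mp ((toList_replaceHead _ hx w) ▸ hg) with rfl | hg
  exacts [hxφ, hw g (List.mem_of_mem_tail hg)]

theorem ofCoprodI_prod_notMem_range_base (hφ : ∀ i, Injective (φ i)) {i j : ι}
    (w : NeWord G i j) (hw : Reduced φ w.toWord) :
    ofCoprodI (φ := φ) w.prod ∉ (base φ).range := fun h =>
  w.toList_ne_nil (congrArg Word.toList (hw.eq_empty_of_mem_range hφ h))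

end CoprodI.NeWord

namespace PushoutI

open CoprodI

variable {ι : Type*} {G : ι → Type*} [∀ i, Group (G i)] {H : Type*} [Group H]
  {φ : ∀ i, H →* G i}

theorem exists_reduced_eq_base_mul_ofCoprodI (hφ : ∀ i, Injective (φ i)) (z : PushoutI φ) :
    ∃ (h : H) (w : Word G), Reduced φ w ∧ z = base φ h * ofCoprodI w.prod := by
  classical
  obtain ⟨d⟩ := NormalWord.transversal_nonempty φ hφ
  set W : NormalWord d := z • (NormalWord.empty : NormalWord d)
  refine ⟨W.head, W.toWord, fun g hg hgφ => W.ne_one g hg ?_, ?_⟩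
  · exact ((d.compl g.1).eq_one_of_mem_of_mem (one_mem _) (d.one_mem g.1) hgφ
      (W.normalized g.1 g.2 hg))
  · rw [← NormalWord.prod, NormalWord.prod_smul, NormalWord.prod_empty, mul_one]

theorem conj_of_eq_of_base_mul_mem_center {h : H} {X : PushoutI φ}
    (hz : base φ h * X ∈ Subgroup.center (PushoutI φ))
    (k : ι) (c : G k) : X * of k c * X⁻¹ = of k (φ k h⁻¹ * c * φ k h) := by
  have hcomm := Subgroup.mem_center_iff.mp hz (of k c)
  rw [map_mul, map_mul, of_apply_eq_base, of_apply_eq_base, map_inv]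
  calc X * of k c * X⁻¹ = (base φ h)⁻¹ * (base φ h * X * of k c) * X⁻¹ := by group
    _ = (base φ h)⁻¹ * of k c * base φ h := by rw [← hcomm]; group

theorem base_mul_ofCoprodI_prod_notMem_center [Nontrivial ι] (hφ : ∀ i, Injective (φ i))
    (hindex : ∀ i, (φ i).range.index ≠ 1 ∧ (φ i).range.index ≠ 2) {i j : ι}
    (w : NeWord G i j) (hw : Reduced φ w.toWord) (h : H) :
    base φ h * ofCoprodI w.prod ∉ Subgroup.center (PushoutI φ) := by
  intro hz
  have hconj := conj_of_eq_of_base_mul_mem_center hz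
  set X := ofCoprodI (φ := φ) w.prod
  have hne_one (k : ι) {c : G k} (hc : c ∉ (φ k).range) : c ≠ 1 := fun h1 => hc (h1 ▸ one_mem _)
  have hconj_notMem (k : ι) {c : G k} (hc : c ∉ (φ k).range) :
      (φ k h⁻¹ * c * φ k h)⁻¹ ∉ (φ k).range := by
    rwa [inv_mem_iff, mul_mem_cancel_right ((φ k).mem_range.mpr ⟨h, rfl⟩),
      mul_mem_cancel_left ((φ k).mem_range.mpr ⟨h⁻¹, rfl⟩)]
  -- With `c' = h⁻¹ c h`, the element `c'⁻¹ X c X⁻¹` is `1`; we spell it as a nonempty reduced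
  -- word. If `w` starts and ends in the same factor, `c` is taken from another factor; otherwise
  -- `c` comes from the first factor and `c'⁻¹` is absorbed into the first letter of `w`, which
  -- is where the index hypothesis is needed.
  suffices ∃ (k l : ι) (c : G k) (M : NeWord G k l), Reduced φ M.toWord ∧
      ofCoprodI M.prod = (of k (φ k h⁻¹ * c * φ k h))⁻¹ * (X * of k c * X⁻¹) by
    obtain ⟨k, l, c, M, hM, hMprod⟩ := this
    refine M.ofCoprodI_prod_notMem_range_base hφ hM ?_
    rw [hMprod, hconj, inv_mul_cancel]
    exact one_mem _
  by_cases hij : i = j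
  · subst hij
    obtain ⟨k, hk⟩ := exists_ne i
    obtain ⟨c, hc⟩ := SetLike.exists_not_mem_of_ne_top _ (mt Subgroup.index_eq_one.mpr (hindex k).1)
    refine ⟨k, i, c, (((NeWord.singleton _ (hne_one k (hconj_notMem k hc))).append hk w).append
      hk.symm (NeWord.singleton c (hne_one k hc))).append hk w.inv, ?_, ?_⟩
    · exact NeWord.reduced_append (NeWord.reduced_append (NeWord.reduced_append
        (NeWord.reduced_singleton _ (hconj_notMem k hc)) hw) (NeWord.reduced_singleton _ hc))
        (NeWord.reduced_inv hw)
    · simp [X, mul_assoc]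
  · obtain ⟨c, hc, hcw⟩ := Subgroup.exists_notMem_and_inv_mul_notMem (hindex i).1 (hindex i).2
      (φ i h * w.head)
    have hhead : (φ i h⁻¹ * c * φ i h)⁻¹ * w.head ∉ (φ i).range := by
      rwa [mul_inv_rev, mul_inv_rev, map_inv, inv_inv, mul_assoc, mul_assoc,
        mul_mem_cancel_left (inv_mem ((φ i).mem_range.mpr ⟨h, rfl⟩))]
    refine ⟨i, i, c, ((w.mulHead _ (hne_one i hhead)).append (Ne.symm hij)
      (NeWord.singleton c (hne_one i hc))).append hij w.inv, ?_, ?_⟩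
    · exact NeWord.reduced_append (NeWord.reduced_append (NeWord.reduced_mulHead hw _ hhead)
        (NeWord.reduced_singleton _ hc)) (NeWord.reduced_inv hw)
    · simp [X, mul_assoc]

theorem center_le_range_base [Nontrivial ι] (hφ : ∀ i, Injective (φ i))
    (hindex : ∀ i, (φ i).range.index ≠ 1 ∧ (φ i).range.index ≠ 2) :
    Subgroup.center (PushoutI φ) ≤ (base φ).range := by
  intro z hz
  obtain ⟨h, w, hw, rfl⟩ := exists_reduced_eq_base_mul_ofCoprodI hφ z
  by_cases hw₀ : w = Word.empty
  · subst hw₀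
    exact ⟨h, by simp⟩
  obtain ⟨i, j, w', rfl⟩ := NeWord.of_word w hw₀
  exact absurd hz (base_mul_ofCoprodI_prod_notMem_center hφ hindex w' hw h)

end PushoutI

end Monoid

namespace SimpleGraph

variable {V W : Type*} {G : SimpleGraph V} {G' : SimpleGraph W}

theorem edist_map_le (f : G →g G') (u v : V) : G'.edist (f u) (f v) ≤ G.edist u v := by
  rw [edist_eq_sInf, edist_eq_sInf]
  exact sInf_le_sInf <| by
    rintro _ ⟨p, rfl⟩
    exact ⟨p.map f, by simp⟩

theorem Iso.dist_eq (e : G ≃g G') (u v : V) : G'.dist (e u) (e v) = G.dist u v := by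
  have hle : G'.edist (e u) (e v) ≤ G.edist u v := edist_map_le e.toHom u v
  have hge : G.edist u v ≤ G'.edist (e u) (e v) := by
    simpa using edist_map_le e.symm.toHom (e u) (e v)
  rw [dist, dist, le_antisymm hle hge]

end SimpleGraph

namespace RAAG

open Monoid PushoutI Set

variable {A : Type*} {Γ : SimpleGraph A}

theorem raagGen_commute {a b : A} (h : Γ.Adj a b) : Commute (raagGen Γ a) (raagGen Γ b) := by
  have := PresentedGroup.one_of_mem (rels := raagRels A Γ) ⟨a, b, h, rfl⟩
  rw [map_mul, map_mul, map_mul, map_inv, map_inv] at this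
  exact commutatorElement_eq_one_iff_commute.mp this

theorem closure_range_raagGen : Subgroup.closure (range (raagGen Γ)) = ⊤ :=
  PresentedGroup.closure_range_of _

theorem hom_ext {G : Type*} [Group G] {f g : RAAG A Γ →* G}
    (h : ∀ a, f (raagGen Γ a) = g (raagGen Γ a)) : f = g :=
  PresentedGroup.ext h

theorem mem_center_iff_forall_commute {z : RAAG A Γ} :
    z ∈ Subgroup.center (RAAG A Γ) ↔ ∀ a, Commute (raagGen Γ a) z := by
  simp [Subgroup.center_eq_iInf closure_range_raagGen, Subgroup.mem_centralizer_singleton_iff,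
    Commute, SemiconjBy, eq_comm]

def lift {G : Type*} [Group G] (f : A → G) (hf : ∀ a b, Γ.Adj a b → Commute (f a) (f b)) :
    RAAG A Γ →* G :=
  PresentedGroup.toGroup <| by
    rintro _ ⟨a, b, hab, rfl⟩
    simpa [commutatorElement_def] using commutatorElement_eq_one_iff_commute.mpr (hf a b hab)

@[simp]
theorem lift_raagGen {G : Type*} [Group G] (f : A → G)
    (hf : ∀ a b, Γ.Adj a b → Commute (f a) (f b)) (a : A) : lift f hf (raagGen Γ a) = f a :=
  PresentedGroup.toGroup.of _

def vertexSubgroup (Γ : SimpleGraph A) (S : Set A) : Subgroup (RAAG A Γ) :=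
  Subgroup.closure (raagGen Γ '' S)

theorem raagGen_mem_vertexSubgroup {S : Set A} {v : A} (hv : v ∈ S) :
    raagGen Γ v ∈ vertexSubgroup Γ S :=
  Subgroup.subset_closure (mem_image_of_mem _ hv)

theorem vertexSubgroup_mono {S T : Set A} (h : S ⊆ T) : vertexSubgroup Γ S ≤ vertexSubgroup Γ T :=
  Subgroup.closure_mono (image_mono h)

theorem closure_preimage_raagGen_eq_top (S : Set A) :
    Subgroup.closure (((↑) : vertexSubgroup Γ S → RAAG A Γ) ⁻¹' (raagGen Γ '' S)) = ⊤ :=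
  Subgroup.closure_closure_coe_preimage

@[simp]
theorem vertexSubgroup_univ : vertexSubgroup Γ univ = ⊤ := by
  rw [vertexSubgroup, image_univ, closure_range_raagGen]

@[simp]
theorem vertexSubgroup_empty : vertexSubgroup Γ ∅ = ⊥ := by
  rw [vertexSubgroup, image_empty, Subgroup.closure_empty]

section Exponent

variable [DecidableEq A]

def exponent (a : A) : RAAG A Γ →* Multiplicative ℤ :=
  lift (fun b => if b = a then Multiplicative.ofAdd 1 else 1) fun _ _ _ => Commute.all _ _

@[simp]
theorem exponent_raagGen (a b : A) :
    exponent a (raagGen Γ b) = if b = a then Multiplicative.ofAdd 1 else 1 :=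
  lift_raagGen _ _ _

theorem exponent_raagGen_zpow (a : A) (n : ℤ) :
    exponent a (raagGen Γ a ^ n) = Multiplicative.ofAdd n := by
  simp [map_zpow, ← ofAdd_zsmul]

theorem exponent_eq_one_of_mem_vertexSubgroup {S : Set A} {a : A} (ha : a ∉ S)
    {z : RAAG A Γ} (hz : z ∈ vertexSubgroup Γ S) : exponent a z = 1 := by
  refine (Subgroup.closure_le (exponent a).ker).mpr ?_ hz
  rintro _ ⟨v, hv, rfl⟩
  simp [ne_of_mem_of_not_mem hv ha]

end Exponent

theorem raagGen_zpow_injective (a : A) : Injective fun n : ℤ => raagGen Γ a ^ n := by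
  classical
  intro m n h
  simpa [exponent_raagGen_zpow] using congrArg (exponent a) h

theorem eq_of_conj_raagGen_eq {x y : RAAG A Γ} {a b : A}
    (h : x * raagGen Γ a * x⁻¹ = y * raagGen Γ b * y⁻¹) : a = b := by
  classical
  by_contra hab
  simpa [hab, eq_comm (a := (1 : Multiplicative ℤ))] using congrArg (exponent b) h

open scoped Classical in
noncomputable def retraction (Γ : SimpleGraph A) (S : Set A) : RAAG A Γ →* RAAG A Γ :=
  lift (fun v => if v ∈ S then raagGen Γ v else 1) fun a b hab => by
    split_ifs
    exacts [raagGen_commute hab, Commute.one_right _, Commute.one_left _, Commute.one_left _]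

theorem retraction_raagGen_of_mem {S : Set A} {v : A} (hv : v ∈ S) :
    retraction Γ S (raagGen Γ v) = raagGen Γ v := by
  simp [retraction, hv]

theorem retraction_raagGen_of_notMem {S : Set A} {v : A} (hv : v ∉ S) :
    retraction Γ S (raagGen Γ v) = 1 := by
  simp [retraction, hv]

theorem retraction_comp_retraction (S T : Set A) :
    (retraction Γ S).comp (retraction Γ T) = retraction Γ (S ∩ T) := by
  refine hom_ext fun v => ?_
  by_cases hT : v ∈ T <;> by_cases hS : v ∈ S <;>
    simp [retraction_raagGen_of_mem, retraction_raagGen_of_notMem, hS, hT]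

theorem retraction_apply_mem (S : Set A) (z : RAAG A Γ) :
    retraction Γ S z ∈ vertexSubgroup Γ S := by
  refine PresentedGroup.generated_by _ ((vertexSubgroup Γ S).comap (retraction Γ S)) (fun v => ?_) z
  change retraction Γ S (raagGen Γ v) ∈ vertexSubgroup Γ S
  by_cases hv : v ∈ S
  · exact (retraction_raagGen_of_mem hv).symm ▸ raagGen_mem_vertexSubgroup hv
  · exact (retraction_raagGen_of_notMem hv).symm ▸ one_mem _

theorem retraction_eq_self_of_mem {S : Set A} {z : RAAG A Γ} (hz : z ∈ vertexSubgroup Γ S) :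
    retraction Γ S z = z := by
  refine (Subgroup.closure_le ((retraction Γ S).eqLocus (MonoidHom.id _))).mpr ?_ hz
  rintro _ ⟨v, hv, rfl⟩
  exact retraction_raagGen_of_mem hv

theorem vertexSubgroup_inf (S T : Set A) :
    vertexSubgroup Γ S ⊓ vertexSubgroup Γ T = vertexSubgroup Γ (S ∩ T) := by
  refine le_antisymm (fun z ⟨hS, hT⟩ => ?_)
    (le_inf (vertexSubgroup_mono inter_subset_left) (vertexSubgroup_mono inter_subset_right))
  rw [← retraction_eq_self_of_mem hS, ← retraction_eq_self_of_mem hT, ← MonoidHom.comp_apply,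
    retraction_comp_retraction]
  exact retraction_apply_mem _ _

theorem iInf_vertexSubgroup {ι : Type*} [Finite ι] (S : ι → Set A) :
    ⨅ i, vertexSubgroup Γ (S i) = vertexSubgroup Γ (⋂ i, S i) := by
  classical
  have := Fintype.ofFinite ι
  suffices ∀ s : Finset ι, ⨅ i ∈ s, vertexSubgroup Γ (S i) = vertexSubgroup Γ (⋂ i ∈ s, S i) by
    simpa using this Finset.univ
  intro s
  induction s using Finset.induction_on with
  | empty => simp
  | insert a s _ ih => rw [Finset.iInf_insert, ih, Finset.set_biInter_insert, vertexSubgroup_inf]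

section Splitting

variable {S T : Set A}

def splittingInclusion (Γ : SimpleGraph A) (S T : Set A) (i : Bool) :
    vertexSubgroup Γ (S ∩ T) →* vertexSubgroup Γ (cond i S T) :=
  Subgroup.inclusion <| vertexSubgroup_mono <| by
    cases i
    exacts [inter_subset_right, inter_subset_left]

def fromPushoutI (Γ : SimpleGraph A) (S T : Set A) :
    PushoutI (splittingInclusion Γ S T) →* RAAG A Γ :=
  PushoutI.lift (fun i => (vertexSubgroup Γ (cond i S T)).subtype)
    (vertexSubgroup Γ (S ∩ T)).subtype fun _ => Subgroup.subtype_comp_inclusion _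

@[simp]
theorem fromPushoutI_of (i : Bool) (x : vertexSubgroup Γ (cond i S T)) :
    fromPushoutI Γ S T (of i x) = x :=
  PushoutI.lift_of _ _ _ _

@[simp]
theorem fromPushoutI_base (x : vertexSubgroup Γ (S ∩ T)) :
    fromPushoutI Γ S T (base _ x) = x :=
  PushoutI.lift_base _ _ _ _

open scoped Classical in
noncomputable def splittingLetter (hcover : S ∪ T = univ) (v : A) :
    PushoutI (splittingInclusion Γ S T) :=
  if hv : v ∈ S then of true ⟨raagGen Γ v, raagGen_mem_vertexSubgroup hv⟩
  else of false ⟨raagGen Γ v,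
    raagGen_mem_vertexSubgroup (((hcover ▸ mem_univ v : v ∈ S ∪ T)).resolve_left hv)⟩

theorem splittingLetter_eq_of (hcover : S ∪ T = univ) {v : A} (i : Bool) (hv : v ∈ cond i S T) :
    splittingLetter (Γ := Γ) hcover v = of i ⟨raagGen Γ v, raagGen_mem_vertexSubgroup hv⟩ := by
  cases i
  · by_cases hS : v ∈ S
    · let x : vertexSubgroup Γ (S ∩ T) := ⟨raagGen Γ v, raagGen_mem_vertexSubgroup ⟨hS, hv⟩⟩
      rw [splittingLetter, dif_pos hS]
      exact (of_apply_eq_base _ true x).trans (of_apply_eq_base _ false x).symm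
    · rw [splittingLetter, dif_neg hS]
  · exact dif_pos hv

noncomputable def toPushoutI (hcover : S ∪ T = univ)
    (hsep : ∀ u v, Γ.Adj u v → u ∈ S ∧ v ∈ S ∨ u ∈ T ∧ v ∈ T) :
    RAAG A Γ →* PushoutI (splittingInclusion Γ S T) :=
  lift (splittingLetter hcover) fun u v huv => by
    obtain ⟨i, hu, hv⟩ : ∃ i, u ∈ cond i S T ∧ v ∈ cond i S T := by
      rcases hsep u v huv with h | h
      exacts [⟨true, h⟩, ⟨false, h⟩]
    rw [splittingLetter_eq_of hcover i hu, splittingLetter_eq_of hcover i hv]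
    have : Commute (⟨raagGen Γ u, raagGen_mem_vertexSubgroup hu⟩ : vertexSubgroup Γ (cond i S T))
        ⟨raagGen Γ v, raagGen_mem_vertexSubgroup hv⟩ :=
      Subtype.ext (raagGen_commute huv).eq
    exact this.map (of (φ := splittingInclusion Γ S T) i)

theorem toPushoutI_raagGen (hcover : S ∪ T = univ)
    (hsep : ∀ u v, Γ.Adj u v → u ∈ S ∧ v ∈ S ∨ u ∈ T ∧ v ∈ T) {v : A} (i : Bool)
    (hv : v ∈ cond i S T) :
    toPushoutI hcover hsep (raagGen Γ v) = of i ⟨raagGen Γ v, raagGen_mem_vertexSubgroup hv⟩ :=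
  (lift_raagGen _ _ v).trans (splittingLetter_eq_of hcover i hv)

noncomputable def mulEquivPushoutI (hcover : S ∪ T = univ)
    (hsep : ∀ u v, Γ.Adj u v → u ∈ S ∧ v ∈ S ∨ u ∈ T ∧ v ∈ T) :
    RAAG A Γ ≃* PushoutI (splittingInclusion Γ S T) :=
  (toPushoutI hcover hsep).toMulEquiv (fromPushoutI Γ S T)
    (hom_ext fun v => by
      obtain ⟨i, hv⟩ : ∃ i, v ∈ cond i S T := by
        rcases (hcover ▸ mem_univ v : v ∈ S ∪ T) with h | h
        exacts [⟨true, h⟩, ⟨false, h⟩]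
      rw [MonoidHom.comp_apply, toPushoutI_raagGen hcover hsep i hv, fromPushoutI_of]
      rfl)
    (hom_ext_nonempty fun i => MonoidHom.eq_of_eqOn_dense (closure_preimage_raagGen_eq_top _)
      fun x ⟨v, hv, hx⟩ => by
        obtain rfl : x = ⟨raagGen Γ v, raagGen_mem_vertexSubgroup hv⟩ := Subtype.ext hx.symm
        rw [MonoidHom.comp_apply, MonoidHom.comp_apply, fromPushoutI_of]
        exact toPushoutI_raagGen hcover hsep i hv)

theorem mulEquivPushoutI_symm_base (hcover : S ∪ T = univ)
    (hsep : ∀ u v, Γ.Adj u v → u ∈ S ∧ v ∈ S ∨ u ∈ T ∧ v ∈ T)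
    (x : vertexSubgroup Γ (S ∩ T)) :
    (mulEquivPushoutI hcover hsep).symm (base (splittingInclusion Γ S T) x) = x :=
  fromPushoutI_base x

end Splitting

theorem index_range_inclusion_eq_zero {U V : Set A}
    (h : vertexSubgroup Γ U ≤ vertexSubgroup Γ V) {a : A} (haV : a ∈ V) (haU : a ∉ U) :
    (Subgroup.inclusion h).range.index = 0 := by
  classical
  by_contra h0
  obtain ⟨n, hn, -, ⟨x, hx⟩⟩ := Subgroup.exists_pow_mem_of_index_ne_zero h0
    ⟨raagGen Γ a, raagGen_mem_vertexSubgroup haV⟩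
  have hxa : (x : RAAG A Γ) = raagGen Γ a ^ (n : ℤ) := congrArg Subtype.val hx
  have := exponent_eq_one_of_mem_vertexSubgroup haU (hxa ▸ x.2)
  rw [exponent_raagGen_zpow, ofAdd_eq_one] at this
  omega

theorem center_le_vertexSubgroup_inter {S T : Set A} (hcover : S ∪ T = univ)
    (hsep : ∀ u v, Γ.Adj u v → u ∈ S ∧ v ∈ S ∨ u ∈ T ∧ v ∈ T) {a b : A} (haS : a ∈ S)
    (haT : a ∉ T) (hbT : b ∈ T) (hbS : b ∉ S) :
    Subgroup.center (RAAG A Γ) ≤ vertexSubgroup Γ (S ∩ T) := by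
  intro z hz
  let e := mulEquivPushoutI hcover hsep
  have hindex (i : Bool) : (splittingInclusion Γ S T i).range.index = 0 := by
    cases i
    exacts [index_range_inclusion_eq_zero _ hbT (hbS ·.1),
      index_range_inclusion_eq_zero _ haS (haT ·.2)]
  obtain ⟨x, hx⟩ := center_le_range_base (φ := splittingInclusion Γ S T)
    (fun _ => Subgroup.inclusion_injective _) (fun i => by rw [hindex i]; decide)
    (MulEquivClass.apply_mem_center e hz)
  rw [← e.symm_apply_apply z, ← hx, mulEquivPushoutI_symm_base]
  exact x.2

theorem center_le_vertexSubgroup_neighborSet {a b : A} (hba : b ≠ a) (hab : ¬ Γ.Adj a b) :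
    Subgroup.center (RAAG A Γ) ≤ vertexSubgroup Γ (Γ.neighborSet a) := by
  have hinter : insert a (Γ.neighborSet a) ∩ {a}ᶜ = Γ.neighborSet a := by
    ext v
    by_cases hv : v = a <;> simp [hv]
  have hcover : insert a (Γ.neighborSet a) ∪ {a}ᶜ = univ := by
    ext v
    by_cases hv : v = a <;> simp [hv]
  refine hinter ▸ center_le_vertexSubgroup_inter hcover (fun u v huv => ?_)
    (mem_insert a _) (by simp) (show b ≠ a from hba) (by simp [hba, hab])
  by_cases hu : u = a
  · exact .inl ⟨.inl hu, .inr (by simpa [hu] using huv)⟩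
  · by_cases hv : v = a
    · exact .inl ⟨.inr (by simpa [hv] using huv.symm), .inl hv⟩
    · exact .inr ⟨hu, hv⟩

theorem center_eq_bot_of_not_isCone [Finite A] (h : ¬ GraphIsCone Γ) :
    Subgroup.center (RAAG A Γ) = ⊥ := by
  simp only [GraphIsCone, not_exists, not_forall] at h
  refine le_bot_iff.mp ?_
  calc Subgroup.center (RAAG A Γ)
      ≤ ⨅ a, vertexSubgroup Γ (Γ.neighborSet a) := le_iInf fun a => by
        obtain ⟨b, hba, hab⟩ := h a
        exact center_le_vertexSubgroup_neighborSet hba hab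
    _ = vertexSubgroup Γ (⋂ a, Γ.neighborSet a) := iInf_vertexSubgroup _
    _ = ⊥ := by
        have : ⋂ a, Γ.neighborSet a = ∅ := iInter_eq_empty_iff.mpr fun v => ⟨v, Γ.irrefl⟩
        rw [this, vertexSubgroup_empty]

theorem raagGen_mem_center_of_forall_adj {a : A} (ha : ∀ b, b ≠ a → Γ.Adj a b) :
    raagGen Γ a ∈ Subgroup.center (RAAG A Γ) :=
  mem_center_iff_forall_commute.mpr fun b => by
    rcases eq_or_ne b a with rfl | hb
    exacts [Commute.refl _, (raagGen_commute (ha b hb)).symm]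

section MulRight

variable {c : RAAG A Γ}

theorem syllGraph_adj_mul_right (hc : c ∈ Subgroup.center (RAAG A Γ)) {x y : RAAG A Γ} :
    (syllGraph A Γ).Adj (x * c) (y * c) ↔ (syllGraph A Γ).Adj x y := by
  have hcomm (z g : RAAG A Γ) : z * c * g = z * g * c := by
    rw [mul_assoc, mul_assoc, Subgroup.mem_center_iff.mp hc g]
  simp [syllGraph, hcomm]

def syllGraphMulRight (hc : c ∈ Subgroup.center (RAAG A Γ)) : syllGraph A Γ ≃g syllGraph A Γ :=
  ⟨Equiv.mulRight c, syllGraph_adj_mul_right hc⟩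

theorem isSyllIsom_mulRight (hc : c ∈ Subgroup.center (RAAG A Γ)) :
    IsSyllIsom Γ (Equiv.mulRight c) :=
  (syllGraphMulRight hc).dist_eq

theorem inducesIdOnExtensionGraph_mulRight (hc : c ∈ Subgroup.center (RAAG A Γ)) :
    InducesIdOnExtensionGraph Γ (Equiv.mulRight c) := by
  have hcomm (x g : RAAG A Γ) : x * g * c = x * c * g := by
    rw [mul_assoc, mul_assoc, Subgroup.mem_center_iff.mp hc g]
  refine fun x a => ⟨x * c, a, ?_, ?_⟩
  · ext y
    constructor
    · rintro ⟨_, ⟨n, rfl⟩, rfl⟩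
      exact ⟨n, hcomm x _⟩
    · rintro ⟨n, rfl⟩
      exact ⟨x * raagGen Γ a ^ n, ⟨n, rfl⟩, hcomm x _⟩
  · rw [← hcomm]
    group

end MulRight

theorem inv_mul_mem_center_of_inducesIdOnExtensionGraph {f : RAAG A Γ ≃ RAAG A Γ}
    (hf : InducesIdOnExtensionGraph Γ f) (x : RAAG A Γ) :
    x⁻¹ * f x ∈ Subgroup.center (RAAG A Γ) := by
  refine mem_center_iff_forall_commute.mpr fun a => ?_
  obtain ⟨y, b, himg, hconj⟩ := hf x a
  obtain rfl := eq_of_conj_raagGen_eq hconj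
  obtain ⟨n, hn⟩ : f x ∈ stdGeo Γ y b := himg ▸ Set.mem_image_of_mem f ⟨0, by simp⟩
  have hfx : f x * raagGen Γ b * (f x)⁻¹ = x * raagGen Γ b * x⁻¹ := by
    rw [hn, ← hconj]
    group
  calc raagGen Γ b * (x⁻¹ * f x) = x⁻¹ * (x * raagGen Γ b * x⁻¹) * f x := by group
    _ = x⁻¹ * f x * raagGen Γ b := by rw [← hfx]; group

end RAAG

open RAAG in
/-- if the finite graph `Γ` is not a cone, the natural homomorphism
`Isom(A_Γ, d_r) → Aut(Γ^e)` is injective (its kernel — the isometries of the syllable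
metric inducing the identity on the extension graph — is trivial); conversely, if `Γ` is
a cone, this kernel is infinite. -/
theorem syllable_isometries_to_extension_graph {A : Type*} [Fintype A]
    (Γ : SimpleGraph A) :
    (¬ GraphIsCone Γ → ∀ f : RAAG A Γ ≃ RAAG A Γ, IsSyllIsom Γ f →
      InducesIdOnExtensionGraph Γ f → f = Equiv.refl (RAAG A Γ)) ∧
    (GraphIsCone Γ →
      {f : RAAG A Γ ≃ RAAG A Γ |
        IsSyllIsom Γ f ∧ InducesIdOnExtensionGraph Γ f}.Infinite) := by
  refine ⟨fun hcone f _ hf => Equiv.ext fun x => ?_, fun ⟨a, ha⟩ => ?_⟩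
  · have hx := inv_mul_mem_center_of_inducesIdOnExtensionGraph hf x
    rwa [center_eq_bot_of_not_isCone hcone, Subgroup.mem_bot, inv_mul_eq_one, eq_comm] at hx
  · have hc (n : ℤ) : raagGen Γ a ^ n ∈ Subgroup.center (RAAG A Γ) :=
      zpow_mem (raagGen_mem_center_of_forall_adj ha) n
    refine Set.infinite_of_injective_forall_mem
      (f := fun n : ℤ => Equiv.mulRight (raagGen Γ a ^ n)) (fun m n hmn => ?_)
      fun n => ⟨isSyllIsom_mulRight (hc n), inducesIdOnExtensionGraph_mulRight (hc n)⟩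
    exact raagGen_zpow_injective a (by simpa using congrArg (· 1) hmn)
end
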